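/- arXiv:0902.2068 — 7 statements merged into one kernel-verified Lean document; each statement's English description precedes it below -/
import Mathlib

section
/- For every unitary complex symmetric matrix K ∈ M_n(ℂ) (i.e. K unitary with K^T = K), there exists a unitary W ∈ M_n(ℂ) such that K = W W^T. -/
/-!
A unitary `K` is normal with spectrum on the unit circle, so `W = K ^ (1/2)`, taken in the
continuous functional calculus with any branch of the square root, is unitary with `W * W = K`.
Since the spectrum of a matrix is finite, `W` is a polynomial in `K` (Lagrange interpolation of
the square root on the spectrum), and therefore `Wᵀ = W` as soon as `Kᵀ = K`.
-/

open Matrix Polynomial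

open scoped Matrix.Norms.L2Operator

lemma Matrix.transpose_aeval {m R : Type*} [Fintype m] [DecidableEq m] [CommSemiring R]
    (A : Matrix m m R) (p : R[X]) : (aeval A p)ᵀ = aeval Aᵀ p := by
  simpa [aeval_op_apply] using congrArg MulOpposite.unop
    (aeval_algHom_apply (transposeAlgEquiv m R R).toAlgHom A p).symm

section FiniteSpectrum

variable {R A : Type*} {p : A → Prop} [Field R] [StarRing R] [MetricSpace R]
  [IsTopologicalRing R] [ContinuousStar R] [TopologicalSpace A] [Ring A] [StarRing A]
  [Algebra R A] [ContinuousFunctionalCalculus R A p]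

lemma exists_cfc_eq_aeval_of_finite_spectrum (f : R → R) {a : A} (ha : p a)
    (hfin : (spectrum R a).Finite) : ∃ q : R[X], cfc f a = aeval a q := by
  classical
  refine ⟨Lagrange.interpolate hfin.toFinset id f, ?_⟩
  rw [← cfc_polynomial _ a ha]
  refine cfc_congr fun x hx ↦ ?_
  simpa using (Lagrange.eval_interpolate_at_node f (Set.injOn_id _)
    (hfin.mem_toFinset.2 hx)).symm

end FiniteSpectrum

lemma Complex.cpow_inv_two_mem_unitary {z : ℂ} (hz : z ∈ unitary ℂ) :
    z ^ (2⁻¹ : ℂ) ∈ unitary ℂ := by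
  have hnorm : ‖z ^ (2⁻¹ : ℂ)‖ = 1 := by
    simpa [CStarRing.norm_of_mem_unitary hz] using Complex.norm_cpow_inv_nat z 2
  rw [Unitary.mem_iff_star_mul_self, Complex.star_def, Complex.conj_mul', hnorm]
  norm_num

section UnitarySqrt

variable {A : Type*} [TopologicalSpace A] [Ring A] [StarRing A] [Algebra ℂ A]
  [ContinuousFunctionalCalculus ℂ A IsStarNormal] {u : A}

lemma cfc_cpow_inv_two_mul_self [IsStarNormal u]
    (hcont : ContinuousOn (fun z : ℂ ↦ z ^ (2⁻¹ : ℂ)) (spectrum ℂ u)) :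
    cfc (fun z : ℂ ↦ z ^ (2⁻¹ : ℂ)) u * cfc (fun z : ℂ ↦ z ^ (2⁻¹ : ℂ)) u = u := by
  rw [← cfc_mul ..]
  conv_rhs => rw [← cfc_id' ℂ u]
  exact cfc_congr fun x _ ↦ by simpa [sq] using Complex.cpow_ofNat_inv_pow x 2

lemma cfc_cpow_inv_two_mem_unitary (hu : u ∈ unitary A)
    (hcont : ContinuousOn (fun z : ℂ ↦ z ^ (2⁻¹ : ℂ)) (spectrum ℂ u)) :
    cfc (fun z : ℂ ↦ z ^ (2⁻¹ : ℂ)) u ∈ unitary A := by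
  have := isStarNormal_of_mem_unitary hu
  rw [cfc_unitary_iff _ u]
  exact fun x hx ↦ (Complex.cpow_inv_two_mem_unitary
    (spectrum_subset_unitary_of_mem_unitary hu hx)).1

end UnitarySqrt

/-- every unitary complex symmetric matrix K can be written K = W Wᵀ
with W unitary. -/
theorem stmt_1 (n : ℕ) (K : Matrix (Fin n) (Fin n) ℂ)
    (hK : K ∈ Matrix.unitaryGroup (Fin n) ℂ) (hsym : Kᵀ = K) :
    ∃ W ∈ Matrix.unitaryGroup (Fin n) ℂ, K = W * Wᵀ := by
  have hfin : (spectrum ℂ K).Finite := Matrix.finite_spectrum K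
  have hcont : ContinuousOn (fun z : ℂ ↦ z ^ (2⁻¹ : ℂ)) (spectrum ℂ K) := hfin.continuousOn _
  have hnormal := isStarNormal_of_mem_unitary hK
  obtain ⟨q, hq⟩ :=
    exists_cfc_eq_aeval_of_finite_spectrum (fun z : ℂ ↦ z ^ (2⁻¹ : ℂ)) hnormal hfin
  have hWT : (cfc (fun z : ℂ ↦ z ^ (2⁻¹ : ℂ)) K)ᵀ = cfc (fun z : ℂ ↦ z ^ (2⁻¹ : ℂ)) K := by
    rw [hq, transpose_aeval, hsym]
  exact ⟨_, cfc_cpow_inv_two_mem_unitary hK hcont, by rw [hWT, cfc_cpow_inv_two_mul_self hcont]⟩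
end

section
/- Every unitary skew-symmetric complex matrix U ∈ M_n(ℂ) (U unitary, U^T = -U) exists only for n even, and can be written U = W Ω_n W^T for some unitary W ∈ M_n(ℂ), where Ω_n is the standard symplectic matrix. -/
/-!
For a unitary `U` with `Uᵀ = -U`, the antiunitary map `J x = U x̄` satisfies `J² = -1`, because
`U Ū = -U U* = -1`. Such a map satisfies `⟪x, J y⟫ = -⟪y, J x⟫`, so `x ⊥ J x`, and a unit vector
orthogonal to `u₁, …, u_k, J u₁, …, J u_k` keeps `J x` orthogonal to them too. Hence a maximal
family of this shape is an orthonormal basis, so `n = 2k`, and the unitary `W` with columns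
`u₁, …, u_k, J u₁, …, J u_k` satisfies `U W̄ = W Ω`, i.e. `U = W Ω Wᵀ`.
-/

open Module Submodule Set

open scoped InnerProductSpace

theorem Orthonormal.cons {𝕜 E : Type*} [RCLike 𝕜] [NormedAddCommGroup E] [InnerProductSpace 𝕜 E]
    {k : ℕ} {u : Fin k → E} (hu : Orthonormal 𝕜 u) {x : E} (hx : ‖x‖ = 1)
    (hxu : ∀ i, ⟪x, u i⟫_𝕜 = 0) : Orthonormal 𝕜 (Fin.cons x u : Fin (k + 1) → E) := by
  refine ⟨Fin.cases hx hu.1, fun i j hij => ?_⟩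
  induction i using Fin.cases <;> induction j using Fin.cases <;>
    simp only [Fin.cons_zero, Fin.cons_succ]
  · exact absurd rfl hij
  · exact hxu _
  · rw [← inner_conj_symm, hxu, map_zero]
  · exact hu.2 fun h => hij (congrArg Fin.succ h)

structure QuaternionicStructure (E : Type*) [NormedAddCommGroup E] [InnerProductSpace ℂ E] where
  toLinearMap : E →ₗ⋆[ℂ] E
  apply_apply : ∀ x, toLinearMap (toLinearMap x) = -x
  inner_apply_apply : ∀ x y, ⟪toLinearMap x, toLinearMap y⟫_ℂ = ⟪y, x⟫_ℂ

namespace QuaternionicStructure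

variable {E : Type*} [NormedAddCommGroup E] [InnerProductSpace ℂ E] (J : QuaternionicStructure E)

instance : CoeFun (QuaternionicStructure E) fun _ => E → E := ⟨fun J => J.toLinearMap⟩

theorem inner_apply_eq_neg (x y : E) : ⟪x, J y⟫_ℂ = -⟪y, J x⟫_ℂ := by
  have h := J.inner_apply_apply y (J x)
  rw [J.apply_apply, inner_neg_right] at h
  rw [← inner_conj_symm, ← inner_conj_symm y, ← h, map_neg, neg_neg]

theorem inner_self_apply (x : E) : ⟪x, J x⟫_ℂ = 0 :=
  self_eq_neg.mp (J.inner_apply_eq_neg x x)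

def IsOrthonormal {ι : Type*} (u : ι → E) : Prop :=
  Orthonormal ℂ (Sum.elim u (J ∘ u))

theorem isOrthonormal_iff {ι : Type*} {u : ι → E} :
    J.IsOrthonormal u ↔ Orthonormal ℂ u ∧ ∀ i j, ⟪u i, J (u j)⟫_ℂ = 0 := by
  classical
  simp only [IsOrthonormal, orthonormal_iff_ite, Sum.forall, Sum.elim_inl, Sum.elim_inr,
    Function.comp_apply, Sum.inl.injEq, Sum.inr.injEq, reduceCtorEq, if_false,
    J.inner_apply_apply]
  constructor
  · rintro ⟨hu, -⟩
    exact ⟨fun i j => (hu i).1 j, fun i j => (hu i).2 j⟩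
  · rintro ⟨hu, hJu⟩
    refine ⟨fun i => ⟨hu i, hJu i⟩, fun i => ⟨fun j => ?_, fun j => ?_⟩⟩
    · rw [← inner_conj_symm, hJu, map_zero]
    · rw [hu]
      exact if_congr eq_comm rfl rfl

theorem IsOrthonormal.cons {k : ℕ} {u : Fin k → E} (hu : J.IsOrthonormal u) {x : E}
    (hx : ‖x‖ = 1) (hxu : ∀ i, ⟪x, u i⟫_ℂ = 0) (hxJu : ∀ i, ⟪x, J (u i)⟫_ℂ = 0) :
    J.IsOrthonormal (Fin.cons x u : Fin (k + 1) → E) := by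
  rw [isOrthonormal_iff] at hu ⊢
  refine ⟨hu.1.cons hx hxu, fun i j => ?_⟩
  induction i using Fin.cases <;> induction j using Fin.cases <;>
    simp only [Fin.cons_zero, Fin.cons_succ]
  · exact J.inner_self_apply x
  · exact hxJu _
  · rw [J.inner_apply_eq_neg, hxJu, neg_zero]
  · exact hu.2 _ _

theorem IsOrthonormal.exists_cons {k : ℕ} {u : Fin k → E} (hu : J.IsOrthonormal u)
    (hspan : span ℂ (range (Sum.elim u (J ∘ u))) ≠ ⊤) :
    ∃ x, J.IsOrthonormal (Fin.cons x u : Fin (k + 1) → E) := by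
  set K := span ℂ (range (Sum.elim u (J ∘ u)))
  have : FiniteDimensional ℂ K := FiniteDimensional.span_of_finite ℂ (finite_range _)
  obtain ⟨y, hyK, hy⟩ := (Submodule.ne_bot_iff Kᗮ).mp (mt orthogonal_eq_bot_iff.mp hspan)
  refine ⟨(‖y‖⁻¹ : ℂ) • y, hu.cons J (norm_smul_inv_norm hy) (fun i => ?_) (fun i => ?_)⟩
  · exact inner_left_of_mem_orthogonal (subset_span (mem_range_self (Sum.inl i)))
      (Kᗮ.smul_mem _ hyK)
  · exact inner_left_of_mem_orthogonal (subset_span (mem_range_self (Sum.inr i)))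
      (Kᗮ.smul_mem _ hyK)

theorem exists_orthonormalBasis [FiniteDimensional ℂ E] :
    ∃ (k : ℕ) (b : OrthonormalBasis (Fin k ⊕ Fin k) ℂ E), ∀ i, b (.inr i) = J (b (.inl i)) := by
  have hbound {k : ℕ} {u : Fin k → E} (hu : J.IsOrthonormal u) : k + k ≤ finrank ℂ E := by
    simpa using hu.linearIndependent.fintype_card_le_finrank
  obtain ⟨k, ⟨u, hu⟩, hmax⟩ : ∃ k, (∃ u : Fin k → E, J.IsOrthonormal u) ∧
      ¬∃ u : Fin (k + 1) → E, J.IsOrthonormal u := by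
    by_contra! hext
    have hall (k : ℕ) : ∃ u : Fin k → E, J.IsOrthonormal u := by
      induction k with
      | zero => exact ⟨Fin.elim0, Orthonormal.of_isEmpty _⟩
      | succ k ih => exact hext k ih
    obtain ⟨u, hu⟩ := hall (finrank ℂ E + 1)
    have := hbound hu
    omega
  have hspan : span ℂ (range (Sum.elim u (J ∘ u))) = ⊤ := by
    by_contra hspan
    obtain ⟨x, hx⟩ := hu.exists_cons J hspan
    exact hmax ⟨_, hx⟩
  have hon : Orthonormal ℂ (Sum.elim u (J ∘ u)) := hu
  exact ⟨k, OrthonormalBasis.mk hon hspan.ge, fun i => by simp⟩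

end QuaternionicStructure

namespace Matrix

variable {ι : Type*} [Fintype ι]

theorem fromCols_mul_J {R m l : Type*} [CommRing R] [Fintype l] [DecidableEq l]
    (A B : Matrix m l R) : fromCols A B * J l R = fromCols B (-A) := by
  simp [J, fromCols_mul_fromBlocks]

theorem submatrix_mul_reindex_mul_transpose {κ R : Type*} [Fintype κ] [CommRing R]
    (W : Matrix ι κ R) (A : Matrix κ κ R) (e : κ ≃ ι) :
    W.submatrix id e.symm * reindex e e A * (W.submatrix id e.symm)ᵀ = W * A * Wᵀ := by
  rw [reindex_apply, submatrix_mul_equiv, transpose_submatrix, submatrix_mul_equiv]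
  rfl

def conjMulVec (U : Matrix ι ι ℂ) : EuclideanSpace ℂ ι →ₗ⋆[ℂ] EuclideanSpace ℂ ι where
  toFun x := WithLp.toLp 2 (U *ᵥ star x.ofLp)
  map_add' x y := by simp [mulVec_add]
  map_smul' c x := by simp [mulVec_smul]

@[simp]
theorem conjMulVec_apply (U : Matrix ι ι ℂ) (x : EuclideanSpace ℂ ι) :
    U.conjMulVec x = WithLp.toLp 2 (U *ᵥ star x.ofLp) :=
  rfl

theorem star_mulVec_star (U : Matrix ι ι ℂ) (v : ι → ℂ) :
    star (U *ᵥ star v) = U.map star *ᵥ v := by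
  rw [star_mulVec, star_star, ← mulVec_transpose, conjTranspose_transpose]

variable [DecidableEq ι]

theorem conjMulVec_conjMulVec {U : Matrix ι ι ℂ} (hU : U * U.map star = -1)
    (x : EuclideanSpace ℂ ι) : U.conjMulVec (U.conjMulVec x) = -x := by
  rw [conjMulVec_apply, conjMulVec_apply, star_mulVec_star, mulVec_mulVec, hU, neg_mulVec,
    one_mulVec]
  rfl

theorem inner_conjMulVec_conjMulVec {U : Matrix ι ι ℂ} (hU : U ∈ unitaryGroup ι ℂ)
    (x y : EuclideanSpace ℂ ι) : ⟪U.conjMulVec x, U.conjMulVec y⟫_ℂ = ⟪y, x⟫_ℂ := by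
  have hU' : (U.map star)ᵀ * U = 1 := mem_unitaryGroup_iff'.mp hU
  rw [EuclideanSpace.inner_eq_star_dotProduct, EuclideanSpace.inner_eq_star_dotProduct,
    conjMulVec_apply, conjMulVec_apply, star_mulVec_star, dotProduct_comm, dotProduct_mulVec,
    ← vecMul_transpose, vecMul_vecMul, hU', vecMul_one]

theorem mul_map_star_eq_neg_one {U : Matrix ι ι ℂ} (hU : U ∈ unitaryGroup ι ℂ)
    (hskew : Uᵀ = -U) : U * U.map star = -1 := by
  have hmap : U.map star = -star U := by
    rw [star_eq_conjTranspose, ← transpose_conjTranspose, hskew, conjTranspose_neg]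
  rw [hmap, Matrix.mul_neg, mem_unitaryGroup_iff.mp hU]

def quaternionicStructure {U : Matrix ι ι ℂ} (hU : U ∈ unitaryGroup ι ℂ) (hskew : Uᵀ = -U) :
    QuaternionicStructure (EuclideanSpace ℂ ι) where
  toLinearMap := U.conjMulVec
  apply_apply := conjMulVec_conjMulVec (mul_map_star_eq_neg_one hU hskew)
  inner_apply_apply := inner_conjMulVec_conjMulVec hU

theorem eq_mul_J_mul_transpose {l : Type*} [Fintype l] [DecidableEq l] {U : Matrix ι ι ℂ}
    (hU : U * U.map star = -1) {W : Matrix ι (l ⊕ l) ℂ} (hW : W * Wᴴ = 1)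
    (hcols : W.toCols₂ = U * W.toCols₁.map star) : U = W * J l ℂ * Wᵀ := by
  have hUW : U * W.map star = W * J l ℂ := by
    obtain ⟨X, Y, rfl⟩ : ∃ X Y, W = fromCols X Y := ⟨_, _, (fromCols_toCols W).symm⟩
    rw [toCols₂_fromCols, toCols₁_fromCols] at hcols
    subst hcols
    have hstar : (U * X.map star).map star = U.map star * X := by
      rw [← conjTranspose_transpose, conjTranspose_mul, transpose_mul, conjTranspose_transpose,
        conjTranspose_transpose, Matrix.map_map, star_involutive.comp_self, Matrix.map_id]
    rw [fromCols_map, mul_fromCols, fromCols_mul_J, hstar, ← Matrix.mul_assoc, hU,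
      Matrix.neg_mul, Matrix.one_mul]
  calc U = U * (W * Wᴴ)ᵀ := by rw [hW, transpose_one, Matrix.mul_one]
    _ = U * W.map star * Wᵀ := by rw [transpose_mul, conjTranspose_transpose, Matrix.mul_assoc]
    _ = W * J l ℂ * Wᵀ := by rw [hUW]

theorem submatrix_mem_unitaryGroup {κ R : Type*} [Fintype κ] [DecidableEq κ] [CommRing R]
    [StarRing R] {W : Matrix ι κ R} (hW : Wᴴ * W = 1) (e : κ ≃ ι) :
    W.submatrix id e.symm ∈ unitaryGroup ι R := by
  rw [mem_unitaryGroup_iff', star_eq_conjTranspose, conjTranspose_submatrix,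
    ← Equiv.coe_refl, submatrix_mul_equiv, hW, submatrix_one_equiv]

theorem exists_eq_mul_J_mul_transpose {U : Matrix ι ι ℂ} (hU : U ∈ unitaryGroup ι ℂ)
    (hskew : Uᵀ = -U) : ∃ (k : ℕ) (W : Matrix ι (Fin k ⊕ Fin k) ℂ),
      Fintype.card ι = k + k ∧ Wᴴ * W = 1 ∧ U = W * J (Fin k) ℂ * Wᵀ := by
  obtain ⟨k, b, hb⟩ := (quaternionicStructure hU hskew).exists_orthonormalBasis
  let e := EuclideanSpace.basisFun ι ℂ
  have hcard : Fintype.card ι = k + k := by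
    simpa using finrank_euclideanSpace.symm.trans (finrank_eq_card_basis b.toBasis)
  have hcols : (e.toBasis.toMatrix b).toCols₂ = U * (e.toBasis.toMatrix b).toCols₁.map star := by
    ext i j
    simp [e, hb, quaternionicStructure, Basis.toMatrix_apply, mul_apply, mulVec, dotProduct]
  exact ⟨k, e.toBasis.toMatrix b, hcard, e.toMatrix_orthonormalBasis_conjTranspose_mul_self b,
    eq_mul_J_mul_transpose (mul_map_star_eq_neg_one hU hskew)
      (e.toMatrix_orthonormalBasis_self_mul_conjTranspose b) hcols⟩

end Matrix

open Matrix

/-- a unitary skew-symmetric complex matrix U ∈ M_n(ℂ) exists only for n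
even (n = k + k), and then U = W Ω_n Wᵀ for some unitary W, where Ω_n is the standard
symplectic matrix (transported to `Fin n` along n = k + k). -/
theorem stmt_3 (n : ℕ) (U : Matrix (Fin n) (Fin n) ℂ)
    (hU : U ∈ Matrix.unitaryGroup (Fin n) ℂ) (hskew : Uᵀ = -U) :
    ∃ (k : ℕ) (h : n = k + k) (W : Matrix (Fin n) (Fin n) ℂ),
      W ∈ Matrix.unitaryGroup (Fin n) ℂ ∧
      U = W * (Matrix.reindex (finSumFinEquiv.trans (finCongr h.symm))
            (finSumFinEquiv.trans (finCongr h.symm))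
            (Matrix.fromBlocks 0 (-(1 : Matrix (Fin k) (Fin k) ℂ)) 1 0)) * Wᵀ := by
  obtain ⟨k, W, hcard, hW, hUW⟩ := exists_eq_mul_J_mul_transpose hU hskew
  have h : n = k + k := by simpa using hcard
  let e := finSumFinEquiv.trans (finCongr h.symm)
  refine ⟨k, h, W.submatrix id e.symm, submatrix_mem_unitaryGroup hW e, ?_⟩
  rw [submatrix_mul_reindex_mul_transpose]
  exact hUW
end

section
/- Let M_k(𝕂) ⊆ M_n(ℂ) be a real form of M_n(ℂ) (𝕂 = ℝ, ℂ, or ℍ) and let α be a *-automorphism of M_k(𝕂) with α² = Id which extends to a ℂ-linear automorphism of M_n(ℂ). Then there exists a self-adjoint unitary γ lying in M_k(𝕂) or in i·M_k(𝕂) such that α(A) = γ A γ for all A ∈ M_k(𝕂). -/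
/-!
By Skolem–Noether the automorphism `f` of `M_n(ℂ)` is conjugation by an invertible `u`.
Since `f² = id`, `u²` commutes with everything, hence is a nonzero scalar, and rescaling `u`
gives `γ` with `γ² = 1` and `f x = γ x γ`. Compatibility with `ᴴ` makes `γᴴ` a second square
root of `1` implementing `f`, so `γᴴ = ±γ`, and positivity of `γᴴγ` rules out the minus sign.

Finally write `γ = b + i c` with `b, c ∈ B`. For `a ∈ B` the element `γ a γ = f a` lies in `B`,
which kills its `i B`-part; hence the `B`-conjugate `b - i c` implements `f` as well, so
`b - i c = ±(b + i c)`, i.e. `c = 0` or `b = 0`.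
-/

open Matrix

section RealForm

open Complex

variable {A : Type*} [Ring A] [Algebra ℂ A] {S : Type*} [SetLike S A] {B : S}

theorem sub_I_smul_mul_mul_sub_I_smul_eq [SubringClass S A]
    (hcap : ∀ b ∈ B, I • b ∈ B → b = 0) {a b c : A}
    (ha : a ∈ B) (hb : b ∈ B) (hc : c ∈ B) (h : (b + I • c) * a * (b + I • c) ∈ B) :
    (b - I • c) * a * (b - I • c) = (b + I • c) * a * (b + I • c) := by
  have hplus : (b + I • c) * a * (b + I • c) =
      (b * a * b - c * a * c) + I • (b * a * c + c * a * b) := by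
    simp only [add_mul, mul_add, smul_mul_assoc, mul_smul_comm]
    linear_combination (norm := module) I_sq • (c * a * c)
  have hminus : (b - I • c) * a * (b - I • c) =
      (b * a * b - c * a * c) - I • (b * a * c + c * a * b) := by
    simp only [sub_mul, mul_sub, smul_mul_assoc, mul_smul_comm]
    linear_combination (norm := module) I_sq • (c * a * c)
  have hP : b * a * b - c * a * c ∈ B :=
    sub_mem (mul_mem (mul_mem hb ha) hb) (mul_mem (mul_mem hc ha) hc)
  have hQ : b * a * c + c * a * b = 0 := by
    refine hcap _ (add_mem (mul_mem (mul_mem hb ha) hc) (mul_mem (mul_mem hc ha) hb)) ?_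
    simpa [hplus] using sub_mem h hP
  rw [hplus, hminus, hQ, smul_zero, add_zero, sub_zero]

theorem AlgEquiv.map_star_of_forall_mem [StarRing A] [StarModule ℂ A]
    (hspan : ∀ x : A, ∃ b ∈ B, ∃ c ∈ B, x = b + I • c) (f : A ≃ₐ[ℂ] A)
    (hf : ∀ b ∈ B, f (star b) = star (f b)) (x : A) : f (star x) = star (f x) := by
  obtain ⟨b, hb, c, hc, rfl⟩ := hspan x
  simp [hf b hb, hf c hc]

end RealForm

namespace Matrix

variable {n : Type*} [Fintype n] [DecidableEq n]

theorem exists_eq_smul_one_of_forall_mul_comm {R : Type*} [CommSemiring R] {m : Matrix n n R}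
    (h : ∀ x, m * x = x * m) : ∃ c : R, m = c • (1 : Matrix n n R) := by
  have hm : m ∈ Set.center (Matrix n n R) := Semigroup.mem_center_iff.2 fun x => (h x).symm
  rw [center_eq_range] at hm
  obtain ⟨c, rfl⟩ := hm
  exact ⟨c, (smul_one_eq_diagonal c).symm⟩

theorem exists_smul_eq_of_forall_conj_eq [Nonempty n] {R : Type*} [CommRing R]
    {γ δ : Matrix n n R} (hγ : γ * γ = 1) (hδ : δ * δ = 1)
    (h : ∀ x, γ * x * γ = δ * x * δ) : ∃ c : R, δ = c • γ ∧ c * c = 1 := by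
  obtain ⟨c, hc⟩ := exists_eq_smul_one_of_forall_mul_comm (m := γ * δ) fun x => calc
    γ * δ * x = γ * (δ * x * δ) * δ := by simp only [mul_assoc, hδ, mul_one]
    _ = γ * (γ * x * γ) * δ := by rw [h]
    _ = x * (γ * δ) := by simp only [← mul_assoc, hγ, one_mul]
  have hδγ : δ = c • γ := by
    rw [← one_mul δ, ← hγ, mul_assoc, hc, mul_smul_comm, mul_one]
  refine ⟨c, hδγ, ?_⟩
  have h1 : (c * c) • (1 : Matrix n n R) = 1 := calc
    (c * c) • (1 : Matrix n n R) = c • γ * c • γ := by rw [smul_mul_smul_comm, hγ]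
    _ = 1 := by rw [← hδγ, hδ]
  obtain ⟨i⟩ := ‹Nonempty n›
  simpa using congrFun (congrFun h1 i) i

section SkolemNoether

variable {K : Type*} [Field K] (f : Matrix n n K ≃ₐ[K] Matrix n n K) (i₀ : n)

def intertwiner (M : Matrix n n K) : Matrix n n K :=
  ∑ r, f (single r i₀ 1) * M * single i₀ r 1

theorem intertwiner_mul_single (M : Matrix n n K) (i j : n) :
    intertwiner f i₀ M * single i j 1 = f (single i i₀ 1) * M * single i₀ j 1 := by
  simp only [intertwiner, Finset.sum_mul, mul_assoc]
  rw [Finset.sum_eq_single_of_mem i (Finset.mem_univ i), single_mul_single_same, one_mul]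
  intro r _ hr
  rw [single_mul_single_of_ne (h := hr), mul_zero, mul_zero]

theorem map_single_mul_intertwiner (M : Matrix n n K) (i j : n) :
    f (single i j 1) * intertwiner f i₀ M = f (single i i₀ 1) * M * single i₀ j 1 := by
  simp only [intertwiner, Finset.mul_sum, ← mul_assoc, ← map_mul]
  rw [Finset.sum_eq_single_of_mem j (Finset.mem_univ j), single_mul_single_same, one_mul]
  intro r _ hr
  rw [single_mul_single_of_ne (h := Ne.symm hr), map_zero, zero_mul, zero_mul]

theorem map_mul_intertwiner (M x : Matrix n n K) :
    f x * intertwiner f i₀ M = intertwiner f i₀ M * x := by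
  induction x using Matrix.induction_on' with
  | h_zero => simp
  | h_add p q hp hq => rw [map_add, add_mul, mul_add, hp, hq]
  | h_std_basis i j c =>
    rw [show single i j c = c • single i j 1 by rw [smul_single, smul_eq_mul, mul_one],
      map_smul, smul_mul_assoc, mul_smul_comm, map_single_mul_intertwiner,
      intertwiner_mul_single]

theorem exists_intertwiner_ne_zero : ∃ M, intertwiner f i₀ M ≠ 0 := by
  have hF : f (single i₀ i₀ 1) ≠ 0 := by
    rw [map_ne_zero_iff _ f.injective]
    exact fun h => by simpa using congrFun (congrFun h i₀) i₀
  obtain ⟨p, q, hpq⟩ : ∃ p q, f (single i₀ i₀ 1) p q ≠ 0 := by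
    by_contra! h
    exact hF (ext h)
  refine ⟨single q i₀ 1, fun h => hpq ?_⟩
  have := congrFun (congrFun (intertwiner_mul_single f i₀ (single q i₀ 1) i₀ i₀) p) i₀
  simpa [h] using this.symm

end SkolemNoether

theorem isUnit_of_ne_zero_of_forall_mul_eq_mul {K : Type*} [Field K] {u : Matrix n n K}
    (hu : u ≠ 0) (g : Matrix n n K → Matrix n n K) (h : ∀ x, g x * u = u * x) : IsUnit u := by
  rw [isUnit_iff_isUnit_det, isUnit_iff_ne_zero]
  intro hdet
  obtain ⟨z, hz, huz⟩ := exists_mulVec_eq_zero_iff.2 hdet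
  obtain ⟨k, hk⟩ : ∃ k, z k ≠ 0 := Function.ne_iff.1 hz
  refine hu (ext fun i j => ?_)
  have hej : single j k (z k)⁻¹ *ᵥ z = Pi.single j 1 := by
    ext
    simp [single_mulVec, inv_mul_cancel₀ hk, Pi.single_apply, Function.update_apply]
  -- `ker u` is stable under every matrix `x`, since `u (x z) = g x (u z)`.
  have hcol : u *ᵥ (single j k (z k)⁻¹ *ᵥ z) = 0 := by
    rw [mulVec_mulVec, ← h, ← mulVec_mulVec, huz, mulVec_zero]
  rw [hej, mulVec_single_one] at hcol
  exact congrFun hcol i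

theorem exists_isUnit_forall_map_mul_eq_mul {K : Type*} [Field K]
    (f : Matrix n n K ≃ₐ[K] Matrix n n K) : ∃ u, IsUnit u ∧ ∀ x, f x * u = u * x := by
  cases isEmpty_or_nonempty n with
  | inl _ => exact ⟨1, isUnit_one, fun _ => Subsingleton.elim _ _⟩
  | inr hn =>
    obtain ⟨i₀⟩ := hn
    obtain ⟨M, hM⟩ := exists_intertwiner_ne_zero f i₀
    exact ⟨_, isUnit_of_ne_zero_of_forall_mul_eq_mul hM f (map_mul_intertwiner f i₀ M),
      map_mul_intertwiner f i₀ M⟩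

theorem exists_mul_self_eq_one_forall_map_eq [Nonempty n] {K : Type*} [Field K] [IsAlgClosed K]
    (f : Matrix n n K ≃ₐ[K] Matrix n n K) (hf : ∀ x, f (f x) = x) :
    ∃ γ : Matrix n n K, γ * γ = 1 ∧ ∀ x, f x = γ * x * γ := by
  obtain ⟨u, hu, hfu⟩ := exists_isUnit_forall_map_mul_eq_mul f
  obtain ⟨l, hl⟩ := exists_eq_smul_one_of_forall_mul_comm (m := u * u) fun x => calc
    u * u * x = u * f x * u := by rw [mul_assoc, ← hfu x, ← mul_assoc]
    _ = x * (u * u) := by rw [← hfu, hf, mul_assoc]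
  have hl0 : l ≠ 0 := by
    rintro rfl
    exact (hu.mul hu).ne_zero (by rw [hl, zero_smul])
  obtain ⟨c, hc⟩ := IsAlgClosed.exists_eq_mul_self l⁻¹
  have hsq : c • u * c • u = 1 := by
    rw [smul_mul_smul_comm, hl, smul_smul, ← hc, inv_mul_cancel₀ hl0, one_smul]
  refine ⟨c • u, hsq, fun x => ?_⟩
  have hfcu : f x * c • u = c • u * x := by rw [mul_smul_comm, hfu, smul_mul_assoc]
  rw [← mul_one (f x), ← hsq, ← mul_assoc, hfcu]

open scoped ComplexOrder in
theorem isHermitian_of_mul_self_eq_one_of_forall_conj [Nonempty n] {𝕜 : Type*} [RCLike 𝕜]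
    {γ : Matrix n n 𝕜} (hγ : γ * γ = 1) (h : ∀ x, γ * xᴴ * γ = (γ * x * γ)ᴴ) :
    γ.IsHermitian := by
  have hγH : γᴴ * γᴴ = 1 := by rw [← conjTranspose_mul, hγ, conjTranspose_one]
  obtain ⟨c, hc, hc2⟩ := exists_smul_eq_of_forall_conj_eq hγ hγH fun x => by
    rw [← conjTranspose_conjTranspose (γ * x * γ), ← h, conjTranspose_mul, conjTranspose_mul,
      conjTranspose_conjTranspose, mul_assoc]
  obtain ⟨i⟩ := ‹Nonempty n›
  have hc0 : 0 ≤ c := by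
    simpa [hc, hγ] using (posSemidef_conjTranspose_mul_self γ).diag_nonneg (i := i)
  rcases mul_self_eq_one_iff.1 hc2 with rfl | rfl
  · rw [IsHermitian, hc, one_smul]
  · exact absurd (RCLike.nonneg_iff.1 hc0).1 (by simp)

open Complex in
theorem mem_or_exists_eq_I_smul_of_mul_self_eq_one [Nonempty n] {S : Type*}
    [SetLike S (Matrix n n ℂ)] [SubringClass S (Matrix n n ℂ)] {B : S}
    (hspan : ∀ x : Matrix n n ℂ, ∃ b ∈ B, ∃ c ∈ B, x = b + I • c)
    (hcap : ∀ b ∈ B, I • b ∈ B → b = 0) {γ : Matrix n n ℂ} (hγ : γ * γ = 1)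
    (hB : ∀ a ∈ B, γ * a * γ ∈ B) : γ ∈ B ∨ ∃ b ∈ B, γ = I • b := by
  obtain ⟨b, hb, c, hc, hγbc⟩ := hspan γ
  have hconjB : ∀ a ∈ B, (b - I • c) * a * (b - I • c) = γ * a * γ := fun a ha => by
    rw [hγbc] at hB ⊢
    exact sub_I_smul_mul_mul_sub_I_smul_eq hcap ha hb hc (hB a ha)
  have hconj : ∀ x, γ * x * γ = (b - I • c) * x * (b - I • c) := by
    intro x
    obtain ⟨p, hp, q, hq, rfl⟩ := hspan x
    simp only [mul_add, add_mul, mul_smul_comm, smul_mul_assoc, hconjB p hp, hconjB q hq]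
  have hsq : (b - I • c) * (b - I • c) = 1 := by simpa [hγ] using (hconj 1).symm
  obtain ⟨ε, hε, hε2⟩ := exists_smul_eq_of_forall_conj_eq hγ hsq hconj
  rw [hγbc] at hε ⊢
  rcases mul_self_eq_one_iff.1 hε2 with rfl | rfl
  · left
    have : (2 * I) • c = 0 := by linear_combination (norm := module) -hε
    rw [smul_eq_zero_iff_right (by simp)] at this
    simpa [this] using hb
  · right
    have : (2 : ℂ) • b = 0 := by linear_combination (norm := module) hε
    rw [smul_eq_zero_iff_right two_ne_zero] at this
    exact ⟨c, hc, by rw [this, zero_add]⟩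

end Matrix

theorem stmt_7_general (n : ℕ) (B : Subalgebra ℝ (Matrix (Fin n) (Fin n) ℂ))
    (hspan : ∀ x : Matrix (Fin n) (Fin n) ℂ, ∃ b ∈ B, ∃ c ∈ B, x = b + Complex.I • c)
    (hcap : ∀ b ∈ B, Complex.I • b ∈ B → b = 0)
    (f : Matrix (Fin n) (Fin n) ℂ ≃ₐ[ℂ] Matrix (Fin n) (Fin n) ℂ)
    (hfB : ∀ b ∈ B, f b ∈ B)
    (hfstar : ∀ b ∈ B, f bᴴ = (f b)ᴴ)
    (hf2 : ∀ x, f (f x) = x) :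
    ∃ γ : Matrix (Fin n) (Fin n) ℂ,
      γᴴ = γ ∧ γ * γ = 1 ∧ (γ ∈ B ∨ ∃ b ∈ B, γ = Complex.I • b) ∧
      ∀ a ∈ B, f a = γ * a * γ := by
  cases isEmpty_or_nonempty (Fin n)
  · exact ⟨1, Subsingleton.elim _ _, Subsingleton.elim _ _, Or.inl (one_mem B),
      fun _ _ => Subsingleton.elim _ _⟩
  obtain ⟨γ, hγ, hfγ⟩ := exists_mul_self_eq_one_forall_map_eq f hf2
  have hstar : ∀ x, f xᴴ = (f x)ᴴ := f.map_star_of_forall_mem hspan hfstar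
  have hγH : γ.IsHermitian := isHermitian_of_mul_self_eq_one_of_forall_conj hγ fun x => by
    rw [← hfγ, ← hfγ, hstar]
  refine ⟨γ, hγH, hγ, mem_or_exists_eq_I_smul_of_mul_self_eq_one hspan hcap hγ fun a ha => ?_,
    fun a _ => hfγ a⟩
  exact hfγ a ▸ hfB a ha

/-- if B ⊆ M_n(ℂ) is a star-closed real form (B + iB = M_n(ℂ),
B ∩ iB = 0) and f is a ℂ-linear algebra automorphism of M_n(ℂ) restricting to a
*-automorphism of B with f² = Id (an admissible grading), then there is a self-adjoint
unitary γ in B or in i·B implementing f on B by conjugation. -/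
theorem stmt_7 (n : ℕ) (B : Subalgebra ℝ (Matrix (Fin n) (Fin n) ℂ))
    (hBstar : ∀ b ∈ B, bᴴ ∈ B)
    (hspan : ∀ x : Matrix (Fin n) (Fin n) ℂ, ∃ b ∈ B, ∃ c ∈ B, x = b + Complex.I • c)
    (hcap : ∀ b ∈ B, Complex.I • b ∈ B → b = 0)
    (f : Matrix (Fin n) (Fin n) ℂ ≃ₐ[ℂ] Matrix (Fin n) (Fin n) ℂ)
    (hfB : ∀ b ∈ B, f b ∈ B)
    (hfstar : ∀ b ∈ B, f bᴴ = (f b)ᴴ)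
    (hf2 : ∀ x, f (f x) = x) :
    ∃ γ : Matrix (Fin n) (Fin n) ℂ,
      γᴴ = γ ∧ γ * γ = 1 ∧ (γ ∈ B ∨ ∃ b ∈ B, γ = Complex.I • b) ∧
      ∀ a ∈ B, f a = γ * a * γ :=
  stmt_7_general n B hspan hcap f hfB hfstar hf2
end

section
/- Let 𝕂 = ℝ and let I be an antiunitary (conjugate-linear isometric involution-like) map on ℂ^n with I² = 1, and let g ∈ M_n(ℂ) be a self-adjoint unitary with g I = −I g. Then n is even, the +1-eigenspace of g has dimension n/2, and the algebra {A ∈ M_n(ℂ) : A I = I A, A g = g A} is *-isomorphic to M_{n/2}(ℂ) via A ↦ P⁺ A P⁺, where P⁺ = (1+g)/2. -/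
/-!
The antiunitary `I` maps the `+1`-eigenspace of `g` conjugate-linearly and bijectively onto the
`-1`-eigenspace, so the two have the same dimension, and since `g² = 1` they are complementary.
An `A` commuting with `g` and `I` is determined by its compression `P⁺AP⁺ = AP⁺`: the identity
`I P⁺ I = 1 - P⁺` gives `A = P⁺AP⁺ + I (P⁺AP⁺) I`. Conversely, for `B` in the corner
`P⁺ M_n(ℂ) P⁺`, the matrix `B + IBI` commutes with `g` and `I`, and its compression is `B`.
-/

open Matrix

lemma IsIdempotentElem.mul_mul_mul_of_commute {M : Type*} [Semigroup M] {p a b : M}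
    (hp : IsIdempotentElem p) (hb : Commute b p) : p * (a * b) * p = p * a * p * (p * b * p) := by
  rw [mul_assoc p b p, hb.eq, ← mul_assoc p p b, hp.eq, mul_assoc (p * a) p, ← mul_assoc p p b,
    hp.eq]
  simp only [mul_assoc, hb.eq]

lemma Submodule.finrank_map_of_injective_semilinear {R V W : Type*} [Ring R] {σ σ' : R →+* R}
    [RingHomInvPair σ σ'] [RingHomInvPair σ' σ] [AddCommGroup V] [Module R V]
    [AddCommGroup W] [Module R W] (f : V →ₛₗ[σ] W) (hf : Function.Injective f)
    (p : Submodule R V) : Module.finrank R (p.map f) = Module.finrank R p := by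
  have hσ : Function.Bijective σ :=
    ⟨fun _ _ h => by simpa only [RingHomInvPair.comp_apply_eq (σ' := σ')] using congrArg σ' h,
      fun x => ⟨σ' x, RingHomInvPair.comp_apply_eq₂⟩⟩
  have := lift_rank_eq_of_equiv_equiv σ (p.equivMapOfInjective f hf).toAddEquiv hσ
    (map_smulₛₗ (p.equivMapOfInjective f hf))
  unfold Module.finrank
  simpa only [Cardinal.toNat_lift] using congrArg Cardinal.toNat this.symm

namespace Matrix

variable {K : Type*} [Field K] {ι : Type*} [DecidableEq ι]

def plusProj (g : Matrix ι ι K) : Matrix ι ι K := (2⁻¹ : K) • (1 + g)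

lemma conjTranspose_plusProj [StarRing K] {g : Matrix ι ι K} (hg : gᴴ = g) :
    (plusProj g)ᴴ = plusProj g := by
  rw [plusProj, conjTranspose_smul, conjTranspose_add, conjTranspose_one, hg, star_inv₀,
    star_ofNat]

variable [Fintype ι] {g : Matrix ι ι K}

lemma commute_plusProj {A : Matrix ι ι K} (h : Commute A g) : Commute A (plusProj g) :=
  ((Commute.one_right A).add_right h).smul_right _

lemma mul_plusProj (hg : g * g = 1) : g * plusProj g = plusProj g := by
  rw [plusProj, mul_smul_comm, mul_add, mul_one, hg, add_comm]

lemma plusProj_mul (hg : g * g = 1) : plusProj g * g = plusProj g := by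
  rw [plusProj, smul_mul_assoc, add_mul, one_mul, hg, add_comm]

lemma mem_ker_mulVecLin_sub_one {v : ι → K} :
    v ∈ LinearMap.ker (g - 1).mulVecLin ↔ g *ᵥ v = v := by
  rw [LinearMap.mem_ker, mulVecLin_apply, sub_mulVec, one_mulVec, sub_eq_zero]

lemma mem_ker_mulVecLin_add_one {v : ι → K} :
    v ∈ LinearMap.ker (g + 1).mulVecLin ↔ g *ᵥ v = -v := by
  rw [LinearMap.mem_ker, mulVecLin_apply, add_mulVec, one_mulVec, add_eq_zero_iff_eq_neg]

section

variable [NeZero (2 : K)]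

lemma isIdempotentElem_plusProj (hg : g * g = 1) : IsIdempotentElem (plusProj g) := by
  have : (1 + g) * (1 + g) = (2 : K) • (1 + g) := by
    rw [add_mul, one_mul, mul_add, mul_one, hg, two_smul]; abel
  rw [IsIdempotentElem, plusProj, smul_mul_smul_comm, this, smul_smul, mul_assoc,
    inv_mul_cancel₀ two_ne_zero, mul_one]

lemma ker_mulVecLin_add_one_eq_range (hg : g * g = 1) :
    LinearMap.ker (g + 1).mulVecLin = LinearMap.range (g - 1).mulVecLin := by
  apply le_antisymm
  · intro v hv
    rw [mem_ker_mulVecLin_add_one] at hv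
    refine ⟨(-2⁻¹ : K) • v, ?_⟩
    rw [mulVecLin_apply, mulVec_smul, sub_mulVec, one_mulVec, hv, ← neg_add', smul_neg, neg_smul,
      neg_neg, ← two_smul K v, smul_smul, inv_mul_cancel₀ two_ne_zero, one_smul]
  · rintro _ ⟨w, rfl⟩
    rw [mem_ker_mulVecLin_add_one, mulVecLin_apply, mulVec_mulVec, mul_sub, hg, mul_one,
      ← neg_sub, neg_mulVec]

lemma finrank_ker_mulVecLin_sub_one_add_add_one (hg : g * g = 1) :
    Module.finrank K (LinearMap.ker (g - 1).mulVecLin) +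
      Module.finrank K (LinearMap.ker (g + 1).mulVecLin) = Fintype.card ι := by
  rw [ker_mulVecLin_add_one_eq_range hg, add_comm, LinearMap.finrank_range_add_finrank_ker,
    Module.finrank_fintype_fun_eq_card]

end

section

variable [StarRing K] (J : (ι → K) →ₗ⋆[K] (ι → K))

lemma map_ker_mulVecLin_sub_one_eq (hJ : ∀ v, J (J v) = v)
    (hgJ : ∀ v, g *ᵥ J v = -J (g *ᵥ v)) :
    (LinearMap.ker (g - 1).mulVecLin).map J = LinearMap.ker (g + 1).mulVecLin := by
  apply le_antisymm
  · rintro _ ⟨v, hv, rfl⟩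
    rw [SetLike.mem_coe, mem_ker_mulVecLin_sub_one] at hv
    rw [mem_ker_mulVecLin_add_one, hgJ, hv]
  · intro w hw
    rw [mem_ker_mulVecLin_add_one] at hw
    refine ⟨J w, ?_, hJ w⟩
    rw [SetLike.mem_coe, mem_ker_mulVecLin_sub_one, hgJ, hw, map_neg, neg_neg]

lemma finrank_ker_mulVecLin_sub_one_eq_add_one (hJ : ∀ v, J (J v) = v)
    (hgJ : ∀ v, g *ᵥ J v = -J (g *ᵥ v)) :
    Module.finrank K (LinearMap.ker (g - 1).mulVecLin) =
      Module.finrank K (LinearMap.ker (g + 1).mulVecLin) := by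
  rw [← map_ker_mulVecLin_sub_one_eq J hJ hgJ, Submodule.finrank_map_of_injective_semilinear J
    (Function.LeftInverse.injective hJ)]

lemma exists_mulVec_eq_conj (B : Matrix ι ι K) :
    ∃ C : Matrix ι ι K, ∀ v, C *ᵥ v = J (B *ᵥ J v) :=
  ⟨LinearMap.toMatrix' (J.comp (B.mulVecLin.comp J)), LinearMap.toMatrix'_mulVec _⟩

lemma exists_compression_eq (hJ : ∀ v, J (J v) = v) (hgJ : ∀ v, g *ᵥ J v = -J (g *ᵥ v))
    (hg : g * g = 1) {B : Matrix ι ι K} (hB : plusProj g * B * plusProj g = B) :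
    ∃ A : Matrix ι ι K, (∀ v, A *ᵥ J v = J (A *ᵥ v)) ∧ Commute A g ∧
      plusProj g * A * plusProj g = B := by
  obtain ⟨C, hC⟩ := exists_mulVec_eq_conj J B
  have hgB : g * B = B := by rw [← hB, ← mul_assoc, ← mul_assoc, mul_plusProj hg]
  have hBg : B * g = B := by rw [← hB, mul_assoc, plusProj_mul hg]
  have hgC : g * C = -C := ext_iff_mulVec.2 fun v => by
    rw [neg_mulVec, ← mulVec_mulVec, hC, hgJ, mulVec_mulVec, hgB]
  have hCg : C * g = -C := ext_iff_mulVec.2 fun v => by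
    have hJg : J (g *ᵥ v) = -(g *ᵥ J v) := by rw [hgJ, neg_neg]
    rw [neg_mulVec, ← mulVec_mulVec, hC, hC, hJg, mulVec_neg, mulVec_mulVec, hBg, map_neg]
  have hPC : plusProj g * C = 0 := by
    rw [plusProj, smul_mul_assoc, add_mul, one_mul, hgC, add_neg_cancel, smul_zero]
  refine ⟨B + C, fun v => ?_, ?_, ?_⟩
  · rw [add_mulVec, add_mulVec, hC, hC, hJ, map_add, hJ, add_comm]
  · rw [Commute, SemiconjBy, add_mul, mul_add, hBg, hgB, hCg, hgC]
  · rw [mul_add, add_mul, hB, hPC, zero_mul, add_zero]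

variable [NeZero (2 : K)]

lemma conj_plusProj_mulVec (hJ : ∀ v, J (J v) = v) (hgJ : ∀ v, g *ᵥ J v = -J (g *ᵥ v))
    (v : ι → K) : J (plusProj g *ᵥ J v) = v - plusProj g *ᵥ v := by
  simp only [plusProj, smul_mulVec, add_mulVec, one_mulVec]
  rw [hgJ, map_smulₛₗ, map_add, map_neg, hJ, hJ,
    starRingEnd_apply, star_inv₀, star_ofNat, eq_sub_iff_add_eq, ← smul_add,
    show v + -(g *ᵥ v) + (v + g *ᵥ v) = (2 : K) • v by module, smul_smul,
    inv_mul_cancel₀ two_ne_zero, one_smul]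

lemma mulVec_eq_compression_add_conj (hJ : ∀ v, J (J v) = v)
    (hgJ : ∀ v, g *ᵥ J v = -J (g *ᵥ v)) (hg : g * g = 1) {A : Matrix ι ι K}
    (hAJ : ∀ v, A *ᵥ J v = J (A *ᵥ v)) (hAg : Commute A g) (v : ι → K) :
    A *ᵥ v =
      (plusProj g * A * plusProj g) *ᵥ v + J ((plusProj g * A * plusProj g) *ᵥ J v) := by
  have hAP : plusProj g * A * plusProj g = A * plusProj g := by
    rw [← (commute_plusProj hAg).eq, mul_assoc, (isIdempotentElem_plusProj hg).eq]
  calc A *ᵥ v = A *ᵥ (plusProj g *ᵥ v) + A *ᵥ (v - plusProj g *ᵥ v) := by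
        rw [← mulVec_add, add_sub_cancel]
    _ = _ := by rw [← conj_plusProj_mulVec J hJ hgJ, hAJ, mulVec_mulVec, mulVec_mulVec, hAP]

lemma eq_of_compression_eq (hJ : ∀ v, J (J v) = v) (hgJ : ∀ v, g *ᵥ J v = -J (g *ᵥ v))
    (hg : g * g = 1) {A A' : Matrix ι ι K} (hAJ : ∀ v, A *ᵥ J v = J (A *ᵥ v))
    (hAg : Commute A g) (hA'J : ∀ v, A' *ᵥ J v = J (A' *ᵥ v)) (hA'g : Commute A' g)
    (h : plusProj g * A * plusProj g = plusProj g * A' * plusProj g) : A = A' :=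
  ext_iff_mulVec.2 fun v => by
    rw [mulVec_eq_compression_add_conj J hJ hgJ hg hAJ hAg, h,
      ← mulVec_eq_compression_add_conj J hJ hgJ hg hA'J hA'g]

end

end Matrix

theorem stmt_9_general (n : ℕ) (I : (Fin n → ℂ) → (Fin n → ℂ))
    (hIadd : ∀ ξ η, I (ξ + η) = I ξ + I η)
    (hIsmul : ∀ (c : ℂ) ξ, I (c • ξ) = star c • I ξ)
    (hI2 : ∀ ξ, I (I ξ) = ξ)
    (g : Matrix (Fin n) (Fin n) ℂ) (hgsa : gᴴ = g) (hg2 : g * g = 1)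
    (hanti : ∀ ξ, g.mulVec (I ξ) = - I (g.mulVec ξ)) :
    Even n ∧
    Module.finrank ℂ (LinearMap.ker (Matrix.mulVecLin (g - 1))) = n / 2 ∧
    (let P := (2⁻¹ : ℂ) • ((1 : Matrix (Fin n) (Fin n) ℂ) + g)
     let S : Set (Matrix (Fin n) (Fin n) ℂ) :=
       {A | (∀ ξ, A.mulVec (I ξ) = I (A.mulVec ξ)) ∧ A * g = g * A}
     (∀ A ∈ S, ∀ A' ∈ S, P * A * P = P * A' * P → A = A') ∧
     (∀ A ∈ S, ∀ A' ∈ S, P * (A * A') * P = (P * A * P) * (P * A' * P)) ∧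
     (∀ A ∈ S, P * Aᴴ * P = (P * A * P)ᴴ) ∧
     (∀ B : Matrix (Fin n) (Fin n) ℂ, P * B * P = B → ∃ A ∈ S, P * A * P = B)) := by
  let J : (Fin n → ℂ) →ₗ⋆[ℂ] (Fin n → ℂ) :=
    { toFun := I, map_add' := hIadd, map_smul' := hIsmul }
  have hdim := finrank_ker_mulVecLin_sub_one_eq_add_one J hI2 hanti
  have hsum := finrank_ker_mulVecLin_sub_one_add_add_one hg2
  rw [Fintype.card_fin] at hsum
  refine ⟨⟨Module.finrank ℂ (LinearMap.ker (g - 1).mulVecLin), by omega⟩, by omega, ?_⟩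
  refine ⟨fun A hA A' hA' h => eq_of_compression_eq J hI2 hanti hg2 hA.1 hA.2 hA'.1 hA'.2 h,
    fun A _ A' hA' => (isIdempotentElem_plusProj hg2).mul_mul_mul_of_commute
      (commute_plusProj hA'.2), fun A _ => ?_, fun B hB => ?_⟩
  · show plusProj g * Aᴴ * plusProj g = (plusProj g * A * plusProj g)ᴴ
    rw [conjTranspose_mul, conjTranspose_mul, conjTranspose_plusProj hgsa, mul_assoc]
  · obtain ⟨A, hAJ, hAg, hAB⟩ := exists_compression_eq J hI2 hanti hg2 hB
    exact ⟨A, ⟨hAJ, hAg⟩, hAB⟩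

/-- for an antiunitary I on ℂ^n with I² = 1 and a self-adjoint unitary g
anticommuting with I: n is even, the +1-eigenspace of g has dimension n/2, and the real
*-algebra {A ∈ M_n(ℂ) : AI = IA, Ag = gA} is *-isomorphic to the corner
P⁺ M_n(ℂ) P⁺ ≅ M_{n/2}(ℂ) via the compression A ↦ P⁺ A P⁺, where P⁺ = (1+g)/2
(the compression is injective, multiplicative, star-preserving, and onto the corner). -/
theorem stmt_9 (n : ℕ) (I : (Fin n → ℂ) → (Fin n → ℂ))
    (hIadd : ∀ ξ η, I (ξ + η) = I ξ + I η)
    (hIsmul : ∀ (c : ℂ) ξ, I (c • ξ) = star c • I ξ)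
    (hIinner : ∀ ξ η, star (I ξ) ⬝ᵥ I η = star η ⬝ᵥ ξ)
    (hI2 : ∀ ξ, I (I ξ) = ξ)
    (g : Matrix (Fin n) (Fin n) ℂ) (hgsa : gᴴ = g) (hg2 : g * g = 1)
    (hanti : ∀ ξ, g.mulVec (I ξ) = - I (g.mulVec ξ)) :
    Even n ∧
    Module.finrank ℂ (LinearMap.ker (Matrix.mulVecLin (g - 1))) = n / 2 ∧
    (let P := (2⁻¹ : ℂ) • ((1 : Matrix (Fin n) (Fin n) ℂ) + g)
     let S : Set (Matrix (Fin n) (Fin n) ℂ) :=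
       {A | (∀ ξ, A.mulVec (I ξ) = I (A.mulVec ξ)) ∧ A * g = g * A}
     (∀ A ∈ S, ∀ A' ∈ S, P * A * P = P * A' * P → A = A') ∧
     (∀ A ∈ S, ∀ A' ∈ S, P * (A * A') * P = (P * A * P) * (P * A' * P)) ∧
     (∀ A ∈ S, P * Aᴴ * P = (P * A * P)ᴴ) ∧
     (∀ B : Matrix (Fin n) (Fin n) ℂ, P * B * P = B → ∃ A ∈ S, P * A * P = B)) :=
  stmt_9_general n I hIadd hIsmul hI2 g hgsa hg2 hanti
end

section
/- Let H be a finite-dimensional complex Hilbert space with a ℤ/2-grading γ (self-adjoint unitary) and an antiunitary J with γJ = εʺJγ for εʺ = ±1, and an intersection pairing ⟨[e],[f]⟩ := tr(γ λ(e) ρ(f)) where λ is a *-representation and ρ(a) = Jλ(a*)J* of a real C*-algebra A. Then the intersection form is εʺ-symmetric: ⟨q,p⟩ = εʺ⟨p,q⟩ for all projections p, q ∈ A. In particular if εʺ = −1 the associated integer matrix ∩ is antisymmetric, hence degenerate whenever A has an odd number of simple summands. -/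
open Matrix

/-- Conjugation of a matrix by the antiunitary J = U ∘ (complex conjugation):
J M J* corresponds to U M̄ Uᴴ. -/
noncomputable def conjJ (d : ℕ) (U M : Matrix (Fin d) (Fin d) ℂ) :
    Matrix (Fin d) (Fin d) ℂ :=
  U * M.map (starRingEnd ℂ) * Uᴴ

private lemma map_star_mul_aux {d : ℕ} (M N : Matrix (Fin d) (Fin d) ℂ) :
    (M * N).map (starRingEnd ℂ) = M.map (starRingEnd ℂ) * N.map (starRingEnd ℂ) :=
  Matrix.map_mul

private lemma conjJ_mul {d : ℕ} {U : Matrix (Fin d) (Fin d) ℂ} (hU : Uᴴ * U = 1)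
    (M N : Matrix (Fin d) (Fin d) ℂ) :
    conjJ d U (M * N) = conjJ d U M * conjJ d U N := by
  unfold conjJ
  rw [map_star_mul_aux]
  calc U * (M.map (starRingEnd ℂ) * N.map (starRingEnd ℂ)) * Uᴴ
      = U * M.map (starRingEnd ℂ) * (Uᴴ * U) * (N.map (starRingEnd ℂ) * Uᴴ) := by
        rw [hU]; noncomm_ring
    _ = U * M.map (starRingEnd ℂ) * Uᴴ * (U * N.map (starRingEnd ℂ) * Uᴴ) := by
        noncomm_ring

private lemma trace_conjJ {d : ℕ} {U : Matrix (Fin d) (Fin d) ℂ} (hU : Uᴴ * U = 1)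
    (M : Matrix (Fin d) (Fin d) ℂ) :
    (conjJ d U M).trace = star M.trace := by
  unfold conjJ
  rw [Matrix.trace_mul_comm, ← Matrix.mul_assoc, hU, Matrix.one_mul]
  simp [Matrix.trace, Matrix.diag, map_sum]

private lemma conjTranspose_conjJ {d : ℕ} (U M : Matrix (Fin d) (Fin d) ℂ) :
    (conjJ d U M)ᴴ = conjJ d U Mᴴ := by
  unfold conjJ
  have h : (M.map (starRingEnd ℂ))ᴴ = Mᴴ.map (starRingEnd ℂ) := by ext i j; simp
  simp [Matrix.conjTranspose_mul, h, Matrix.mul_assoc]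

private lemma conjJ_conjJ {d : ℕ} {U : Matrix (Fin d) (Fin d) ℂ} {ε : ℝ}
    (hJ2 : U * U.map (starRingEnd ℂ) = (ε : ℂ) • 1) (hε2 : (ε : ℂ) * ε = 1)
    (M : Matrix (Fin d) (Fin d) ℂ) :
    conjJ d U (conjJ d U M) = M := by
  have hbar : U.map (starRingEnd ℂ) * U = (ε : ℂ) • 1 := by
    have := congrArg (fun X => X.map (starRingEnd ℂ)) hJ2
    simp only [map_star_mul_aux] at this
    have h1 : (U.map (starRingEnd ℂ)).map (starRingEnd ℂ) = U := by ext i j; simp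
    have h2 : (((ε : ℂ) • 1 : Matrix (Fin d) (Fin d) ℂ)).map (starRingEnd ℂ)
        = (ε : ℂ) • 1 := by
      ext i j
      by_cases h : i = j <;> simp [Matrix.smul_apply, Matrix.one_apply, h]
    rw [h1, h2] at this
    exact this
  have hUT : Uᵀ * Uᴴ = (ε : ℂ) • 1 := by
    have hh : Uᴴ = (U.map (starRingEnd ℂ))ᵀ := by ext i j; simp
    rw [hh, ← Matrix.transpose_mul, hbar]
    ext i j
    by_cases h : i = j
    · subst h; simp [Matrix.transpose_apply, Matrix.smul_apply, Matrix.one_apply]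
    · simp [Matrix.transpose_apply, Matrix.smul_apply, Matrix.one_apply, h, Ne.symm h]
  unfold conjJ
  rw [map_star_mul_aux, map_star_mul_aux]
  have h1 : (U.map (starRingEnd ℂ)).map (starRingEnd ℂ) = U := by ext i j; simp
  have h3 : Uᴴ.map (starRingEnd ℂ) = Uᵀ := by ext i j; simp
  have h2 : (M.map (starRingEnd ℂ)).map (starRingEnd ℂ) = M := by ext i j; simp
  rw [h2, h3]
  calc U * (U.map (starRingEnd ℂ) * M * Uᵀ) * Uᴴ
      = (U * U.map (starRingEnd ℂ)) * M * (Uᵀ * Uᴴ) := by noncomm_ring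
    _ = ((ε : ℂ) • 1) * M * ((ε : ℂ) • 1) := by rw [hJ2, hUT]
    _ = ((ε : ℂ) * ε) • M := by
        rw [smul_mul_assoc, one_mul, mul_smul_comm, mul_one, smul_smul]
    _ = M := by rw [hε2, one_smul]

/-- for a real C*-algebra A represented by λ on a finite-dimensional
Hilbert space with grading γ ([γ, λ(a)] = 0), antiunitary J (modelled by the unitary U,
J = U ∘ conj) with J² = ε and γJ = ε″Jγ, and right action ρ(a) = Jλ(a*)J*, the
intersection pairing ⟨[p],[q]⟩ = tr(γ λ(p) ρ(q)) is ε″-symmetric: ⟨q,p⟩ = ε″⟨p,q⟩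
for projections p, q ∈ A.  In particular (ε″ = −1) an antisymmetric integer matrix of
odd size is degenerate. -/
theorem stmt_10 {A : Type*} [Ring A] [StarRing A] [Algebra ℝ A]
    (d : ℕ) (lam : A →⋆ₐ[ℝ] Matrix (Fin d) (Fin d) ℂ)
    (U γ : Matrix (Fin d) (Fin d) ℂ)
    (hU : U ∈ Matrix.unitaryGroup (Fin d) ℂ)
    (ε ε'' : ℝ) (hε : ε = 1 ∨ ε = -1) (hε'' : ε'' = 1 ∨ ε'' = -1)
    (hJ2 : U * U.map (starRingEnd ℂ) = (ε : ℂ) • 1)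
    (hγsa : γᴴ = γ) (hγ2 : γ * γ = 1)
    (hγJ : γ * U = (ε'' : ℂ) • (U * γ.map (starRingEnd ℂ)))
    (hγlam : ∀ a : A, γ * lam a = lam a * γ)
    (horder0 : ∀ a b : A, lam a * conjJ d U (lam (star b)) = conjJ d U (lam (star b)) * lam a)
    (p q : A) (hp1 : star p = p) (hp2 : p * p = p) (hq1 : star q = q) (hq2 : q * q = q) :
    (γ * lam q * conjJ d U (lam (star p))).trace
      = (ε'' : ℂ) * (γ * lam p * conjJ d U (lam (star q))).trace ∧
    (ε'' = -1 → ∀ N : ℕ, Odd N →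
      ∀ C : Matrix (Fin N) (Fin N) ℤ, Cᵀ = -C → C.det = 0) := by
  have hUl : Uᴴ * U = 1 := by simpa [Matrix.star_eq_conjTranspose] using hU.1
  have hUr : U * Uᴴ = 1 := by simpa [Matrix.star_eq_conjTranspose] using hU.2
  have hε2 : (ε : ℂ) * ε = 1 := by rcases hε with h | h <;> simp [h]
  have hε''2 : (ε'' : ℂ) * ε'' = 1 := by rcases hε'' with h | h <;> simp [h]
  constructor
  · set P := lam p with hP
    set Q := lam q with hQ
    set ρp := conjJ d U (lam (star p)) with hρp
    set ρq := conjJ d U (lam (star q)) with hρq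
    -- self-adjointness facts
    have hPsa : Pᴴ = P := by
      rw [hP, ← Matrix.star_eq_conjTranspose, ← map_star, hp1]
    have hQsa : Qᴴ = Q := by
      rw [hQ, ← Matrix.star_eq_conjTranspose, ← map_star, hq1]
    have hρpsa : ρpᴴ = ρp := by
      rw [hρp, conjTranspose_conjJ, ← Matrix.star_eq_conjTranspose, ← map_star,
        star_star, hp1]
    have hγP : γ * P = P * γ := hγlam p
    have hcomm : Q * ρp = ρp * Q := horder0 q p
    -- conjJ γ = ε'' • γ
    have hconjγ : conjJ d U γ = (ε'' : ℂ) • γ := by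
      have h1 : U * γ.map (starRingEnd ℂ) = (ε'' : ℂ) • (γ * U) := by
        conv_rhs => rw [hγJ]
        rw [smul_smul, hε''2, one_smul]
      unfold conjJ
      rw [h1, smul_mul_assoc, Matrix.mul_assoc, hUr, Matrix.mul_one]
    -- key step A : trace is "real" under ᴴ
    have stepA : (γ * Q * ρp).trace = star ((γ * Q * ρp).trace) := by
      rw [← Matrix.trace_conjTranspose]
      have hconj : (γ * Q * ρp)ᴴ = ρp * Q * γ := by
        rw [Matrix.conjTranspose_mul, Matrix.conjTranspose_mul, hρpsa, hQsa, hγsa,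
          Matrix.mul_assoc]
      rw [hconj]
      calc (γ * Q * ρp).trace = (γ * (Q * ρp)).trace := by rw [Matrix.mul_assoc]
        _ = (γ * (ρp * Q)).trace := by rw [hcomm]
        _ = ((ρp * Q) * γ).trace := (Matrix.trace_mul_comm _ _).symm
        _ = (ρp * Q * γ).trace := rfl
    -- key step B : star of trace equals ε'' * other trace
    have stepB : star ((γ * Q * ρp).trace) = (ε'' : ℂ) * (γ * P * ρq).trace := by
      rw [← trace_conjJ hUl]
      rw [conjJ_mul hUl, conjJ_mul hUl, hconjγ]
      have h1 : conjJ d U Q = ρq := by rw [hQ, hρq, hq1]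
      have h2 : conjJ d U ρp = P := by
        rw [hρp, conjJ_conjJ hJ2 hε2, hp1]
      rw [h1, h2, smul_mul_assoc, smul_mul_assoc, Matrix.trace_smul, smul_eq_mul]
      congr 1
      calc (γ * ρq * P).trace = (P * (γ * ρq)).trace := Matrix.trace_mul_comm _ _
        _ = (P * γ * ρq).trace := by rw [Matrix.mul_assoc]
        _ = (γ * P * ρq).trace := by rw [← hγP]
    rw [stepA, stepB]
  · intro _ N hN C hC
    have h1 : C.det = (-C).det := by rw [← hC, Matrix.det_transpose]
    rw [Matrix.det_neg, Fintype.card_fin, hN.neg_one_pow, neg_one_mul] at h1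
    omega
end

section
/- Let V₁, V₂ be finite-dimensional complex Hilbert spaces and X the antiunitary on V₁ ⊗ V₂ determined by X(ξ ⊗ η) = η̄ ⊗ ξ̄ when V₂ = V̄₁ — more concretely, for V₁ = V₂ = ℂ^n, X(ξ₁ ⊗ ξ₂) = ξ̄₂ ⊗ ξ̄₁. If A ∈ M_n(ℂ) ⊗ M_n(ℂ) satisfies: conjugation by A preserves M_n(ℂ) ⊗ 1 and agrees there with conjugation by γ₁ ⊗ 1, and conjugation by XAX preserves M_n(ℂ) ⊗ 1 and agrees there with conjugation by γ₂ ⊗ 1, where γ₁, γ₂ are self-adjoint unitaries, and A is a self-adjoint unitary, then A = ± γ₁ ⊗ γ₂^T. -/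
/-!
Put `B = γ₁ ⊗ γ₂ᵀ`. Conjugating the hypothesis on `XAX` by `X` shows that `A` acts on
`1 ⊗ Mₙ(ℂ)` as `1 ⊗ γ̄₂ = 1 ⊗ γ₂ᵀ` does, so `A` and `B` induce the same inner automorphism on
`Mₙ(ℂ) ⊗ 1` and on `1 ⊗ Mₙ(ℂ)`, which together generate `Mₙ(ℂ) ⊗ Mₙ(ℂ)`. As `A² = B² = 1`,
`BA` is then central, hence a scalar `c`, so `A = cB` with `c² = 1`.
-/

open Matrix
open scoped Kronecker

lemma commute_mul_of_conj_eq {M : Type*} [Monoid M] {a b x : M} (ha : a * a = 1)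
    (hb : b * b = 1) (h : a * x * a = b * x * b) : Commute (b * a) x :=
  calc b * a * x = b * (a * x * a) * a := by rw [mul_assoc b, mul_assoc, mul_assoc, ha, mul_one]
    _ = x * (b * a) := by rw [h, ← mul_assoc, ← mul_assoc, hb, one_mul, mul_assoc]

namespace Matrix

section SwapStar

variable {m R : Type*}

/-- The conjugation `M ↦ X M X` by the antiunitary `X (ξ ⊗ η) = η̄ ⊗ ξ̄` of `Rᵐ ⊗ Rᵐ`. -/
def swapStar [Star R] (M : Matrix (m × m) (m × m) R) : Matrix (m × m) (m × m) R :=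
  of fun p q => star (M p.swap q.swap)

@[simp]
lemma swapStar_apply [Star R] (M : Matrix (m × m) (m × m) R) (p q : m × m) :
    swapStar M p q = star (M p.swap q.swap) :=
  rfl

@[simp]
lemma swapStar_swapStar [InvolutiveStar R] (M : Matrix (m × m) (m × m) R) :
    swapStar (swapStar M) = M := by
  ext p q
  simp

lemma swapStar_conjTranspose [InvolutiveStar R] (M : Matrix (m × m) (m × m) R) :
    swapStar Mᴴ = (swapStar M)ᴴ := by
  ext p q
  simp

lemma swapStar_mul [Fintype m] [CommSemiring R] [StarRing R] (M N : Matrix (m × m) (m × m) R) :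
    swapStar (M * N) = swapStar M * swapStar N := by
  ext p q
  simp only [swapStar_apply, mul_apply, star_sum, star_mul']
  exact Fintype.sum_equiv (Equiv.prodComm m m) _ _ fun _ => rfl

lemma swapStar_kronecker [CommMagma R] [StarMul R] (a b : Matrix m m R) :
    swapStar (a ⊗ₖ b) = b.map star ⊗ₖ a.map star := by
  ext p q
  simp [star_mul', mul_comm]

lemma map_star_mul [Fintype m] [CommSemiring R] [StarRing R] (a b : Matrix m m R) :
    (a * b).map star = a.map star * b.map star := by
  simp only [← conjTranspose_transpose, conjTranspose_mul, transpose_mul]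

lemma map_star_one [DecidableEq m] [Semiring R] [StarRing R] :
    (1 : Matrix m m R).map star = 1 :=
  map_star_eq_one.mpr rfl

lemma conj_one_kronecker_of_conj_swapStar [Fintype m] [DecidableEq m] [CommSemiring R]
    [StarRing R] {A : Matrix (m × m) (m × m) R} {γ : Matrix m m R}
    (h : ∀ a : Matrix m m R, swapStar A * (a ⊗ₖ 1) * (swapStar A)ᴴ = (γ * a * γ) ⊗ₖ 1)
    (b : Matrix m m R) :
    A * (1 ⊗ₖ b) * Aᴴ = 1 ⊗ₖ (γ.map star * b * γ.map star) := by
  simpa only [swapStar_mul, swapStar_conjTranspose, swapStar_swapStar, swapStar_kronecker,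
    map_star_mul, map_star_one, map_map, star_involutive.comp_self, map_id] using
    congrArg swapStar (h (b.map star))

end SwapStar

section Kronecker

variable {m n R : Type*} [Fintype m] [Fintype n] [DecidableEq m] [DecidableEq n]

lemma mem_range_scalar_of_commute_kronecker [CommSemiring R] {D : Matrix (m × n) (m × n) R}
    (h₁ : ∀ a : Matrix m m R, Commute D (a ⊗ₖ 1)) (h₂ : ∀ b : Matrix n n R, Commute D (1 ⊗ₖ b)) :
    D ∈ Set.range (scalar (m × n)) := by
  refine mem_range_scalar_iff_commute_single'.mpr fun ⟨i, k⟩ ⟨j, l⟩ => ?_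
  have hsplit : single (i, k) (j, l) (1 : R) = (single i j 1 ⊗ₖ 1) * (1 ⊗ₖ single k l 1) := by
    rw [← mul_kronecker_mul, mul_one, one_mul, single_kronecker_single, mul_one]
  rw [hsplit]
  exact ((h₁ _).mul_right (h₂ _)).symm

lemma eq_or_eq_neg_of_conj_kronecker_eq [CommRing R] [NoZeroDivisors R]
    {A B : Matrix (m × n) (m × n) R} (hA : A * A = 1) (hB : B * B = 1)
    (h₁ : ∀ a : Matrix m m R, A * (a ⊗ₖ 1) * A = B * (a ⊗ₖ 1) * B)
    (h₂ : ∀ b : Matrix n n R, A * (1 ⊗ₖ b) * A = B * (1 ⊗ₖ b) * B) :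
    A = B ∨ A = -B := by
  obtain ⟨c, hc⟩ := mem_range_scalar_of_commute_kronecker
    (fun a => commute_mul_of_conj_eq hA hB (h₁ a)) (fun b => commute_mul_of_conj_eq hA hB (h₂ b))
  have hAc : A = c • B := by
    rw [← one_mul A, ← hB, mul_assoc, ← hc, scalar_apply, ← smul_one_eq_diagonal,
      Matrix.mul_smul, mul_one]
  cases isEmpty_or_nonempty (m × n) with
  | inl _ => exact Or.inl (Subsingleton.elim A B)
  | inr hne =>
    obtain ⟨p⟩ := hne
    have hcc : c * c = 1 := by
      have hsq : (c * c) • (1 : Matrix (m × n) (m × n) R) = 1 := by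
        rwa [hAc, smul_mul_smul_comm, hB] at hA
      simpa using congrFun (congrFun hsq p) p
    rcases mul_self_eq_one_iff.mp hcc with rfl | rfl
    · exact Or.inl (by rwa [one_smul] at hAc)
    · exact Or.inr (by rwa [neg_smul, one_smul] at hAc)

end Kronecker

end Matrix

theorem stmt_13_general (n : ℕ)
    (A : Matrix (Fin n × Fin n) (Fin n × Fin n) ℂ)
    (γ₁ γ₂ : Matrix (Fin n) (Fin n) ℂ)
    (hA : A ∈ Matrix.unitaryGroup (Fin n × Fin n) ℂ) (hAsa : Aᴴ = A)
    (hγ₁u : γ₁ * γ₁ = 1)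
    (hγ₂sa : γ₂ᴴ = γ₂) (hγ₂u : γ₂ * γ₂ = 1)
    (XAX : Matrix (Fin n × Fin n) (Fin n × Fin n) ℂ)
    (hXAX : ∀ p q : Fin n × Fin n, XAX p q = star (A (p.2, p.1) (q.2, q.1)))
    (h1 : ∀ a : Matrix (Fin n) (Fin n) ℂ,
      A * (a ⊗ₖ (1 : Matrix (Fin n) (Fin n) ℂ)) * Aᴴ
        = (γ₁ * a * γ₁) ⊗ₖ (1 : Matrix (Fin n) (Fin n) ℂ))
    (h2 : ∀ a : Matrix (Fin n) (Fin n) ℂ,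
      XAX * (a ⊗ₖ (1 : Matrix (Fin n) (Fin n) ℂ)) * XAXᴴ
        = (γ₂ * a * γ₂) ⊗ₖ (1 : Matrix (Fin n) (Fin n) ℂ)) :
    A = γ₁ ⊗ₖ γ₂ᵀ ∨ A = -(γ₁ ⊗ₖ γ₂ᵀ) := by
  have hXAX_eq : XAX = swapStar A := ext hXAX
  have hAA : A * A = 1 := by
    rw [mem_unitaryGroup_iff, star_eq_conjTranspose, hAsa] at hA
    exact hA
  rw [hAsa] at h1
  have hγ₂T : γ₂ᵀ * γ₂ᵀ = 1 := by rw [← transpose_mul, hγ₂u, transpose_one]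
  have hγ₂_map : γ₂.map star = γ₂ᵀ := by rw [← conjTranspose_transpose, hγ₂sa]
  refine eq_or_eq_neg_of_conj_kronecker_eq hAA ?_ (fun a => ?_) (fun b => ?_)
  · rw [← mul_kronecker_mul, hγ₁u, hγ₂T, one_kronecker_one]
  · rw [h1, ← mul_kronecker_mul, ← mul_kronecker_mul, mul_one, hγ₂T]
  · have h2' := conj_one_kronecker_of_conj_swapStar (hXAX_eq ▸ h2) b
    rw [hγ₂_map, hAsa] at h2'
    rw [h2', ← mul_kronecker_mul, ← mul_kronecker_mul, mul_one, hγ₁u]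

/-- on ℂⁿ ⊗ ℂⁿ with X the antiunitary X(ξ₁ ⊗ ξ₂) = ξ̄₂ ⊗ ξ̄₁ (so that
conjugating a matrix by X gives (XAX)(p,q) = conj (A (swap p) (swap q))): if A is a
self-adjoint unitary whose conjugation action on M_n(ℂ) ⊗ 1 agrees with that of γ₁ ⊗ 1,
and the conjugation action of XAX on M_n(ℂ) ⊗ 1 agrees with that of γ₂ ⊗ 1, for
self-adjoint unitaries γ₁, γ₂, then A = ± γ₁ ⊗ γ₂ᵀ. -/
theorem stmt_13 (n : ℕ)
    (A : Matrix (Fin n × Fin n) (Fin n × Fin n) ℂ)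
    (γ₁ γ₂ : Matrix (Fin n) (Fin n) ℂ)
    (hA : A ∈ Matrix.unitaryGroup (Fin n × Fin n) ℂ) (hAsa : Aᴴ = A)
    (hγ₁sa : γ₁ᴴ = γ₁) (hγ₁u : γ₁ * γ₁ = 1)
    (hγ₂sa : γ₂ᴴ = γ₂) (hγ₂u : γ₂ * γ₂ = 1)
    (XAX : Matrix (Fin n × Fin n) (Fin n × Fin n) ℂ)
    (hXAX : ∀ p q : Fin n × Fin n, XAX p q = star (A (p.2, p.1) (q.2, q.1)))
    (h1 : ∀ a : Matrix (Fin n) (Fin n) ℂ,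
      A * (a ⊗ₖ (1 : Matrix (Fin n) (Fin n) ℂ)) * Aᴴ
        = (γ₁ * a * γ₁) ⊗ₖ (1 : Matrix (Fin n) (Fin n) ℂ))
    (h2 : ∀ a : Matrix (Fin n) (Fin n) ℂ,
      XAX * (a ⊗ₖ (1 : Matrix (Fin n) (Fin n) ℂ)) * XAXᴴ
        = (γ₂ * a * γ₂) ⊗ₖ (1 : Matrix (Fin n) (Fin n) ℂ)) :
    A = γ₁ ⊗ₖ γ₂ᵀ ∨ A = -(γ₁ ⊗ₖ γ₂ᵀ) :=
  stmt_13_general n A γ₁ γ₂ hA hAsa hγ₁u hγ₂sa hγ₂u XAX hXAX h1 h2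
end

section
/- Let H be a finite-dimensional Hilbert space with antiunitary J, J² = ε ∈ {±1}, and self-adjoint unitary γ with {γ, J} = 0. If Jʹ is another antiunitary on H with (Jʹ)² = ε, {γ, Jʹ} = 0, and both J and Jʹ implement the same right action (Jλ(a*)J* = Jʹλ(a*)(Jʹ)* for all a in an algebra A represented on H via λ, with [γ, λ(a)] = 0), then there is a unitary K on H commuting with λ(A), with the right action, and with γ, such that Jʹ = K J K*. Concretely, with H = H^even ⊕ H^odd the eigenspace decomposition of γ and J̃ = P^odd J P^even, J̃ʹ = P^odd Jʹ P^even, the unitary K = 1 ⊕ (J̃ʹ J̃*) works. -/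
open Matrix

section aux
variable {d : ℕ}

lemma mapc_mapc (M : Matrix (Fin d) (Fin d) ℂ) :
    (M.map (starRingEnd ℂ)).map (starRingEnd ℂ) = M := by
  ext i j; simp

lemma ct_mapc (M : Matrix (Fin d) (Fin d) ℂ) :
    (M.map (starRingEnd ℂ))ᴴ = Mᵀ := by
  ext i j; simp [Matrix.conjTranspose_apply]

lemma mapc_ct (M : Matrix (Fin d) (Fin d) ℂ) :
    (Mᴴ).map (starRingEnd ℂ) = Mᵀ := by
  ext i j; simp [Matrix.conjTranspose_apply]

lemma t_ct (M : Matrix (Fin d) (Fin d) ℂ) :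
    (Mᴴ)ᵀ = M.map (starRingEnd ℂ) := by
  ext i j; simp [Matrix.conjTranspose_apply]
end aux

set_option maxHeartbeats 1600000 in
/-- uniqueness up to unitary equivalence of real structures of
KO-dimension 2 or 6.  J and J′ are antiunitaries (modelled by unitaries U, U′ via
J = U ∘ conj), both with J² = ε and anticommuting with the grading γ, implementing the
same right action a ↦ Jλ(a*)J* of an algebra A represented by λ with [γ, λ(a)] = 0.
Then the concrete unitary K = P⁺ + P⁻ U′ Uᴴ P⁻ (i.e. K = 1 ⊕ J̃′J̃* with respect to
H = H^even ⊕ H^odd) commutes with λ(A), with the right action and with γ, and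
satisfies J′ = K J K* (in matrix form U′ = K U Kᵀ). -/
theorem stmt_19 {A : Type*} [InvolutiveStar A] (d : ℕ)
    (lam : A → Matrix (Fin d) (Fin d) ℂ)
    (U U' γ : Matrix (Fin d) (Fin d) ℂ)
    (hU : U ∈ Matrix.unitaryGroup (Fin d) ℂ) (hU' : U' ∈ Matrix.unitaryGroup (Fin d) ℂ)
    (ε : ℝ) (hεpm : ε = 1 ∨ ε = -1)
    (hJ2 : U * U.map (starRingEnd ℂ) = (ε : ℂ) • 1)
    (hJ'2 : U' * U'.map (starRingEnd ℂ) = (ε : ℂ) • 1)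
    (hγsa : γᴴ = γ) (hγ2 : γ * γ = 1)
    (hγJ : γ * U = -(U * γ.map (starRingEnd ℂ)))
    (hγJ' : γ * U' = -(U' * γ.map (starRingEnd ℂ)))
    (hγlam : ∀ a, γ * lam a = lam a * γ)
    (hsame : ∀ a, conjJ d U (lam (star a)) = conjJ d U' (lam (star a))) :
    let Pp := (2⁻¹ : ℂ) • ((1 : Matrix (Fin d) (Fin d) ℂ) + γ)
    let Pm := (2⁻¹ : ℂ) • ((1 : Matrix (Fin d) (Fin d) ℂ) - γ)
    let K := Pp + Pm * U' * Uᴴ * Pm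
    K ∈ Matrix.unitaryGroup (Fin d) ℂ ∧
    (∀ a, K * lam a = lam a * K) ∧
    (∀ a, K * conjJ d U (lam (star a)) = conjJ d U (lam (star a)) * K) ∧
    K * γ = γ * K ∧
    U' = K * U * Kᵀ := by
  intro Pp Pm K
  have e2 : (ε : ℂ) * (ε : ℂ) = 1 := by
    rcases hεpm with h | h <;> rw [h] <;> norm_num
  have hUl : Uᴴ * U = 1 := by simpa [Matrix.star_eq_conjTranspose] using hU.1
  have hUr : U * Uᴴ = 1 := by simpa [Matrix.star_eq_conjTranspose] using hU.2
  have hU'l : U'ᴴ * U' = 1 := by simpa [Matrix.star_eq_conjTranspose] using hU'.1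
  have hU'r : U' * U'ᴴ = 1 := by simpa [Matrix.star_eq_conjTranspose] using hU'.2
  -- cancellation helpers
  have cUl : ∀ X : Matrix (Fin d) (Fin d) ℂ, Uᴴ * (U * X) = X := fun X => by
    rw [← mul_assoc, hUl, one_mul]
  have cUr : ∀ X : Matrix (Fin d) (Fin d) ℂ, U * (Uᴴ * X) = X := fun X => by
    rw [← mul_assoc, hUr, one_mul]
  have cU'l : ∀ X : Matrix (Fin d) (Fin d) ℂ, U'ᴴ * (U' * X) = X := fun X => by
    rw [← mul_assoc, hU'l, one_mul]
  have cU'r : ∀ X : Matrix (Fin d) (Fin d) ℂ, U' * (U'ᴴ * X) = X := fun X => by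
    rw [← mul_assoc, hU'r, one_mul]
  set gb := γ.map (starRingEnd ℂ) with hgb
  have hγt : γᵀ = gb := by
    ext i j
    have h := congrFun (congrFun hγsa j) i
    simp only [Matrix.conjTranspose_apply] at h
    simpa [hgb, Matrix.map_apply] using h.symm
  have hgb2 : gb * gb = 1 := by
    have h := congrArg (fun M : Matrix (Fin d) (Fin d) ℂ => M.map (starRingEnd ℂ)) hγ2
    simpa [Matrix.map_mul] using h
  -- antilinear-part identities
  have hgbH : gbᴴ = gb := by rw [hgb, ct_mapc, hγt]
  have hUbar : U.map (starRingEnd ℂ) = (ε : ℂ) • Uᴴ := by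
    have h := congrArg (fun M => Uᴴ * M) hJ2
    simpa [← mul_assoc, hUl, Matrix.mul_smul] using h
  have hU'bar : U'.map (starRingEnd ℂ) = (ε : ℂ) • U'ᴴ := by
    have h := congrArg (fun M => U'ᴴ * M) hJ'2
    simpa [← mul_assoc, hU'l, Matrix.mul_smul] using h
  have hUt : Uᵀ = (ε : ℂ) • U := by
    have h := congrArg conjTranspose hUbar
    simpa [ct_mapc, Matrix.conjTranspose_smul, Complex.conj_ofReal] using h
  have hU't : U'ᵀ = (ε : ℂ) • U' := by
    have h := congrArg conjTranspose hU'bar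
    simpa [ct_mapc, Matrix.conjTranspose_smul, Complex.conj_ofReal] using h
  have hγU : γ * U = -(U * gb) := hγJ
  have hγU' : γ * U' = -(U' * gb) := hγJ'
  have hUHγ : Uᴴ * γ = -(gb * Uᴴ) := by
    have h := congrArg conjTranspose hγJ
    simpa [Matrix.conjTranspose_mul, hγsa, hgbH] using h
  have hU'Hγ : U'ᴴ * γ = -(gb * U'ᴴ) := by
    have h := congrArg conjTranspose hγJ'
    simpa [Matrix.conjTranspose_mul, hγsa, hgbH] using h
  have hgbUH : gb * Uᴴ = -(Uᴴ * γ) := by rw [hUHγ, neg_neg]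
  have hgbU'H : gb * U'ᴴ = -(U'ᴴ * γ) := by rw [hU'Hγ, neg_neg]
  set V := U' * Uᴴ with hV
  have hVγ : γ * V = V * γ := by
    calc γ * (U' * Uᴴ) = (γ * U') * Uᴴ := by rw [mul_assoc]
      _ = -(U' * gb) * Uᴴ := by rw [hγU']
      _ = -(U' * (gb * Uᴴ)) := by rw [neg_mul, mul_assoc]
      _ = -(U' * -(Uᴴ * γ)) := by rw [hgbUH]
      _ = U' * (Uᴴ * γ) := by rw [mul_neg, neg_neg]
      _ = (U' * Uᴴ) * γ := by rw [mul_assoc]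
  have hVHl : Vᴴ * V = 1 := by
    simp only [hV, Matrix.conjTranspose_mul, Matrix.conjTranspose_conjTranspose,
      mul_assoc, cU'l, hUr]
  have hVHr : V * Vᴴ = 1 := by
    simp only [hV, Matrix.conjTranspose_mul, Matrix.conjTranspose_conjTranspose,
      mul_assoc, cUl, hU'r]
  -- same right action, rephrased
  have hsame' : ∀ a, U * (lam a).map (starRingEnd ℂ) * Uᴴ
      = U' * (lam a).map (starRingEnd ℂ) * U'ᴴ := by
    intro a
    have h := hsame (star a)
    simpa [conjJ, star_star] using h
  have hVlam : ∀ a, V * lam a = lam a * V := by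
    intro a
    have h1 := hsame' a
    have h2 := congrArg (fun M : Matrix (Fin d) (Fin d) ℂ => M.map (starRingEnd ℂ)) h1
    simp only [Matrix.map_mul, mapc_mapc, mapc_ct, hUt, hU't] at h2
    -- h2 : U.map c * lam a * (ε•U) = U'.map c * lam a * (ε•U')
    rw [hUbar, hU'bar] at h2
    have h3 : Uᴴ * lam a * U = U'ᴴ * lam a * U' := by
      simp only [Matrix.smul_mul, Matrix.mul_smul, smul_smul] at h2
      have h2' : ((ε:ℂ)*(ε:ℂ)) • (Uᴴ * lam a * U)
          = ((ε:ℂ)*(ε:ℂ)) • (U'ᴴ * lam a * U') := by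
        convert h2 using 2
      rwa [e2, one_smul, one_smul] at h2'
    have h5 : (U' * Uᴴ) * lam a * (U * Uᴴ) = (U' * U'ᴴ) * lam a * (U' * Uᴴ) := by
      calc (U' * Uᴴ) * lam a * (U * Uᴴ) = U' * (Uᴴ * lam a * U) * Uᴴ := by
            simp only [mul_assoc]
        _ = U' * (U'ᴴ * lam a * U') * Uᴴ := by rw [h3]
        _ = (U' * U'ᴴ) * lam a * (U' * Uᴴ) := by simp only [mul_assoc]
    simpa [hUr, hU'r, hV] using h5
  have hVC : ∀ a, V * conjJ d U (lam (star a)) = conjJ d U (lam (star a)) * V := by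
    intro a
    have h1 := hsame a
    simp only [conjJ] at h1 ⊢
    set Mb := (lam (star a)).map (starRingEnd ℂ) with hMb
    have l1 : V * (U * Mb * Uᴴ) = U' * (Mb * Uᴴ) := by
      simp only [hV, mul_assoc, cUl]
    have l2 : (U * Mb * Uᴴ) * V = U' * (Mb * Uᴴ) := by
      rw [h1]
      simp only [hV, mul_assoc, cU'l]
    rw [l1, l2]
  -- projection algebra
  have hPp : Pp = (2⁻¹ : ℂ) • ((1 : Matrix (Fin d) (Fin d) ℂ) + γ) := rfl
  have hPm : Pm = (2⁻¹ : ℂ) • ((1 : Matrix (Fin d) (Fin d) ℂ) - γ) := rfl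
  have hPsum : Pp + Pm = 1 := by rw [hPp, hPm]; module
  have hPp2 : Pp * Pp = Pp := by
    rw [hPp, smul_mul_smul_comm]
    simp only [add_mul, mul_add, sub_mul, mul_sub, one_mul, mul_one, hγ2]
    module
  have hPm2 : Pm * Pm = Pm := by
    rw [hPm, smul_mul_smul_comm]
    simp only [add_mul, mul_add, sub_mul, mul_sub, one_mul, mul_one, hγ2]
    module
  have hPpPm : Pp * Pm = 0 := by
    rw [hPp, hPm, smul_mul_smul_comm]
    simp only [add_mul, mul_add, sub_mul, mul_sub, one_mul, mul_one, hγ2]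
    module
  have hPmPp : Pm * Pp = 0 := by
    rw [hPp, hPm, smul_mul_smul_comm]
    simp only [add_mul, mul_add, sub_mul, mul_sub, one_mul, mul_one, hγ2]
    module
  have hPpH : Ppᴴ = Pp := by
    rw [hPp, Matrix.conjTranspose_smul, Matrix.conjTranspose_add, Matrix.conjTranspose_one,
      hγsa]
    norm_num
  have hPmH : Pmᴴ = Pm := by
    rw [hPm, Matrix.conjTranspose_smul, Matrix.conjTranspose_sub, Matrix.conjTranspose_one,
      hγsa]
    norm_num
  have hγPp : γ * Pp = Pp := by
    rw [hPp, Matrix.mul_smul, mul_add, mul_one, hγ2]; module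
  have hPpγ : Pp * γ = Pp := by
    rw [hPp, Matrix.smul_mul, add_mul, one_mul, hγ2]; module
  have hγPm : γ * Pm = -Pm := by
    rw [hPm, Matrix.mul_smul, mul_sub, mul_one, hγ2]; module
  have hPmγ : Pm * γ = -Pm := by
    rw [hPm, Matrix.smul_mul, sub_mul, one_mul, hγ2]; module
  -- commutation with Pp, Pm from commutation with γ
  have commP : ∀ X : Matrix (Fin d) (Fin d) ℂ, γ * X = X * γ →
      Pp * X = X * Pp ∧ Pm * X = X * Pm := by
    intro X hX
    constructor
    · rw [hPp, Matrix.smul_mul, Matrix.mul_smul, add_mul, mul_add, one_mul, mul_one, hX]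
    · rw [hPm, Matrix.smul_mul, Matrix.mul_smul, sub_mul, mul_sub, one_mul, mul_one, hX]
  have hVPp : Pp * V = V * Pp := (commP V hVγ).1
  have hVPm : Pm * V = V * Pm := (commP V hVγ).2
  have hVHγ : γ * Vᴴ = Vᴴ * γ := by
    have h := congrArg conjTranspose hVγ
    simpa [Matrix.conjTranspose_mul, hγsa] using h.symm
  have hVHPp : Pp * Vᴴ = Vᴴ * Pp := (commP Vᴴ hVHγ).1
  have hVHPm : Pm * Vᴴ = Vᴴ * Pm := (commP Vᴴ hVHγ).2
  have hKval : K = Pp + V * Pm := by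
    show Pp + Pm * U' * Uᴴ * Pm = Pp + V * Pm
    congr 1
    calc Pm * U' * Uᴴ * Pm = Pm * V * Pm := by rw [mul_assoc Pm U' Uᴴ]
      _ = V * (Pm * Pm) := by rw [hVPm, mul_assoc]
      _ = V * Pm := by rw [hPm2]
  have hKH : Kᴴ = Pp + Vᴴ * Pm := by
    rw [hKval, Matrix.conjTranspose_add, Matrix.conjTranspose_mul, hPpH, hPmH, hVHPm]
  have hK1 : Kᴴ * K = 1 := by
    have t1 : Pp * (V * Pm) = 0 := by
      rw [← mul_assoc, hVPp, mul_assoc, hPpPm, mul_zero]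
    have t2 : Vᴴ * Pm * Pp = 0 := by rw [mul_assoc, hPmPp, mul_zero]
    have t3 : Vᴴ * Pm * (V * Pm) = Pm := by
      rw [mul_assoc Vᴴ Pm, ← mul_assoc Pm V Pm, hVPm, mul_assoc V Pm Pm, hPm2,
        ← mul_assoc, hVHl, one_mul]
    rw [hKH, hKval, add_mul, mul_add, mul_add, t1, t2, t3, hPp2, add_zero, zero_add, hPsum]
  have hK2 : K * Kᴴ = 1 := by
    have t1 : Pp * (Vᴴ * Pm) = 0 := by
      rw [← mul_assoc, hVHPp, mul_assoc, hPpPm, mul_zero]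
    have t2 : V * Pm * Pp = 0 := by rw [mul_assoc, hPmPp, mul_zero]
    have t3 : V * Pm * (Vᴴ * Pm) = Pm := by
      rw [mul_assoc V Pm, ← mul_assoc Pm Vᴴ Pm, hVHPm, mul_assoc Vᴴ Pm Pm, hPm2,
        ← mul_assoc, hVHr, one_mul]
    rw [hKH, hKval, add_mul, mul_add, mul_add, t1, t2, t3, hPp2, add_zero, zero_add, hPsum]
  have hγC : ∀ a, γ * conjJ d U (lam (star a)) = conjJ d U (lam (star a)) * γ := by
    intro a
    simp only [conjJ]
    set Mb := (lam (star a)).map (starRingEnd ℂ) with hMbdef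
    have hgbMb : gb * Mb = Mb * gb := by
      have h := congrArg (fun M : Matrix (Fin d) (Fin d) ℂ => M.map (starRingEnd ℂ))
        (hγlam (star a))
      simpa [Matrix.map_mul] using h
    calc γ * (U * Mb * Uᴴ) = γ * U * Mb * Uᴴ := by rw [← mul_assoc, ← mul_assoc]
      _ = -(U * gb) * Mb * Uᴴ := by rw [hγU]
      _ = -(U * (gb * Mb) * Uᴴ) := by simp only [neg_mul, mul_assoc]
      _ = -(U * (Mb * gb) * Uᴴ) := by rw [hgbMb]
      _ = -(U * Mb * (gb * Uᴴ)) := by simp only [mul_assoc]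
      _ = -(U * Mb * -(Uᴴ * γ)) := by rw [hgbUH]
      _ = U * Mb * (Uᴴ * γ) := by simp only [mul_neg, neg_neg]
      _ = U * Mb * Uᴴ * γ := by rw [← mul_assoc]
  refine ⟨?_, ?_, ?_, ?_, ?_⟩
  · exact Matrix.mem_unitaryGroup_iff.mpr (by
      rwa [Matrix.star_eq_conjTranspose])
  · intro a
    have h1 : Pp * lam a = lam a * Pp := (commP (lam a) (hγlam a)).1
    have h2 : Pm * lam a = lam a * Pm := (commP (lam a) (hγlam a)).2
    rw [hKval, add_mul, mul_add, h1, mul_assoc, h2, ← mul_assoc, hVlam a, mul_assoc]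
  · intro a
    have h1 : Pp * conjJ d U (lam (star a)) = conjJ d U (lam (star a)) * Pp :=
      (commP _ (hγC a)).1
    have h2 : Pm * conjJ d U (lam (star a)) = conjJ d U (lam (star a)) * Pm :=
      (commP _ (hγC a)).2
    rw [hKval, add_mul, mul_add, h1, mul_assoc, h2, ← mul_assoc, hVC a, mul_assoc]
  · have l : K * γ = Pp + V * -Pm := by
      rw [hKval, add_mul, hPpγ, mul_assoc, hPmγ]
    have r : γ * K = Pp + V * -Pm := by
      rw [hKval, mul_add, hγPp, ← mul_assoc, hVγ, mul_assoc, hγPm]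
    rw [l, r]
  · -- U' = K * U * Kᵀ
    set Qp := (2⁻¹ : ℂ) • ((1 : Matrix (Fin d) (Fin d) ℂ) + gb) with hQp
    set Qm := (2⁻¹ : ℂ) • ((1 : Matrix (Fin d) (Fin d) ℂ) - gb) with hQm
    have hQsum : Qp + Qm = 1 := by rw [hQp, hQm]; module
    have hQp2 : Qp * Qp = Qp := by
      rw [hQp, smul_mul_smul_comm]
      simp only [add_mul, mul_add, one_mul, mul_one, hgb2]
      module
    have hQm2 : Qm * Qm = Qm := by
      rw [hQm, smul_mul_smul_comm]
      simp only [sub_mul, mul_sub, one_mul, mul_one, hgb2]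
      module
    have hQmQp : Qm * Qp = 0 := by
      rw [hQp, hQm, smul_mul_smul_comm]
      simp only [add_mul, mul_add, sub_mul, mul_sub, one_mul, mul_one, hgb2]
      module
    have hQpQm : Qp * Qm = 0 := by
      rw [hQp, hQm, smul_mul_smul_comm]
      simp only [add_mul, mul_add, sub_mul, mul_sub, one_mul, mul_one, hgb2]
      module
    have hVt : Vᵀ = Uᴴ * U' := by
      rw [hV, Matrix.transpose_mul, t_ct, hUbar, hU't, smul_mul_smul_comm, e2, one_smul]
    have hPpt : Ppᵀ = Qp := by
      rw [hPp, Matrix.transpose_smul, Matrix.transpose_add, Matrix.transpose_one, hγt]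
    have hPmt : Pmᵀ = Qm := by
      rw [hPm, Matrix.transpose_smul, Matrix.transpose_sub, Matrix.transpose_one, hγt]
    have hKT : Kᵀ = Qp + Qm * (Uᴴ * U') := by
      rw [hKval, Matrix.transpose_add, Matrix.transpose_mul, hPpt, hPmt, hVt]
    have hPpU : Pp * U = U * Qm := by
      rw [hPp, hQm, Matrix.smul_mul, Matrix.mul_smul]
      congr 1
      rw [add_mul, one_mul, hγU, mul_sub, mul_one, sub_eq_add_neg]
    have hPpU' : Pp * U' = U' * Qm := by
      rw [hPp, hQm, Matrix.smul_mul, Matrix.mul_smul]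
      congr 1
      rw [add_mul, one_mul, hγU', mul_sub, mul_one, sub_eq_add_neg]
    have hPmU : Pm * U = U * Qp := by
      rw [hPm, hQp, Matrix.smul_mul, Matrix.mul_smul]
      congr 1
      rw [sub_mul, one_mul, hγU, mul_add, mul_one, sub_neg_eq_add]
    have hQmUH : Qm * Uᴴ = Uᴴ * Pp := by
      rw [hQm, hPp, Matrix.smul_mul, Matrix.mul_smul]
      congr 1
      rw [sub_mul, one_mul, hgbUH, mul_add, mul_one, sub_neg_eq_add]
    have step1 : K * U = U * Qm + U' * Qp := by
      rw [hKval, add_mul, hPpU, mul_assoc, hPmU, ← mul_assoc, hV,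
        mul_assoc U' Uᴴ U, hUl, mul_one]
    have t1 : U * Qm * Qp = 0 := by rw [mul_assoc, hQmQp, mul_zero]
    have t2 : U * Qm * (Qm * (Uᴴ * U')) = U' * Qm := by
      rw [mul_assoc U Qm, ← mul_assoc Qm Qm, hQm2, ← mul_assoc Qm Uᴴ U', hQmUH,
        mul_assoc Uᴴ Pp U', cUr, hPpU']
    have t3 : U' * Qp * Qp = U' * Qp := by rw [mul_assoc, hQp2]
    have t4 : U' * Qp * (Qm * (Uᴴ * U')) = 0 := by
      rw [mul_assoc, ← mul_assoc Qp Qm, hQpQm, zero_mul, mul_zero]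
    have main : K * U * Kᵀ = U' := by
      rw [hKT, step1, add_mul, mul_add, mul_add, t1, t2, t3, t4, zero_add, add_zero,
        ← mul_add, add_comm Qm Qp, hQsum, mul_one]
    exact main.symm
end
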